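/- arXiv:2601.14464 — 9 statements merged into one kernel-verified Lean document; each statement's English description precedes it below -/
import Mathlib

section
/- Let (Y, 𝔅, μ) be a measure space, K a nonempty finite index type, and φ : K → Y → ℝ≥0 a family of measurable functions. Let ν be a measure on (Y, 𝔅) such that for every measurable set B ⊆ Y and every k ∈ K, ν(B) ≤ ∫_B φ k dμ. Then for every measurable set B ⊆ Y, ν(B) ≤ ∫_B (fun y => min over k ∈ K of φ k y) dμ, where the integrand is the pointwise minimum of the family (which is measurable since K is finite). -/
/-!
Split a measurable set `B` along the measurable set `{f ≤ g}`: on one piece `min f g = f`, on the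
other `min f g = g`, and adding the two bounds for `ν` gives the bound by `min f g` on `B`. Finitely
many densities are then handled by iterating this over a finite infimum.
-/

open MeasureTheory
open scoped ENNReal NNReal

namespace MeasureTheory

variable {Y : Type*} [MeasurableSpace Y] {μ ν : Measure Y}

theorem le_withDensity_inf {f g : Y → ℝ≥0∞} (hf : Measurable f) (hg : Measurable g)
    (hνf : ν ≤ μ.withDensity f) (hνg : ν ≤ μ.withDensity g) :
    ν ≤ μ.withDensity (f ⊓ g) := by
  refine Measure.le_iff.2 fun B hB => ?_
  set S := {y | f y ≤ g y}
  have hS : MeasurableSet S := measurableSet_le hf hg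
  have on_S : μ.withDensity f (B ∩ S) = μ.withDensity (f ⊓ g) (B ∩ S) := by
    rw [withDensity_apply _ (hB.inter hS), withDensity_apply _ (hB.inter hS)]
    exact setLIntegral_congr_fun (hB.inter hS) fun y hy => (min_eq_left hy.2).symm
  have off_S : μ.withDensity g (B \ S) = μ.withDensity (f ⊓ g) (B \ S) := by
    rw [withDensity_apply _ (hB.diff hS), withDensity_apply _ (hB.diff hS)]
    exact setLIntegral_congr_fun (hB.diff hS) fun y hy => (min_eq_right (le_of_not_ge hy.2)).symm
  calc ν B = ν (B ∩ S) + ν (B \ S) := (measure_inter_add_sdiff B hS).symm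
    _ ≤ μ.withDensity f (B ∩ S) + μ.withDensity g (B \ S) := add_le_add (hνf _) (hνg _)
    _ = μ.withDensity (f ⊓ g) B := by rw [on_S, off_S, measure_inter_add_sdiff B hS]

theorem le_withDensity_iInf {K : Type*} [Fintype K] [Nonempty K] {f : K → Y → ℝ≥0∞}
    (hf : ∀ k, Measurable (f k)) (hνf : ∀ k, ν ≤ μ.withDensity (f k)) :
    ν ≤ μ.withDensity (⨅ k, f k) := by
  rw [← Finset.inf'_univ_eq_ciInf]
  refine (Finset.inf'_induction _ f (p := fun g => Measurable g ∧ ν ≤ μ.withDensity g)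
    (fun g₁ h₁ g₂ h₂ => ⟨h₁.1.inf h₂.1, le_withDensity_inf h₁.1 h₂.1 h₁.2 h₂.2⟩)
    fun k _ => ⟨hf k, hνf k⟩).2

end MeasureTheory

/-- If a measure `ν` is bounded on every measurable set `B` by the integral
over `B` of each member of a finite nonempty family of measurable sub-densities `φ k`, then
`ν` is bounded on every measurable set by the integral of the pointwise minimum
(infimum over the finite index type) of the family. -/
theorem pointwise_min_bound
    {Y : Type*} [MeasurableSpace Y] (μ ν : Measure Y)
    {K : Type*} [Fintype K] [Nonempty K]
    (φ : K → Y → NNReal) (hφ : ∀ k, Measurable (φ k))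
    (h : ∀ B : Set Y, MeasurableSet B → ∀ k : K, ν B ≤ ∫⁻ y in B, (φ k y : ℝ≥0∞) ∂μ) :
    ∀ B : Set Y, MeasurableSet B → ν B ≤ ∫⁻ y in B, (⨅ k : K, (φ k y : ℝ≥0∞)) ∂μ := by
  have hν : ν ≤ μ.withDensity (⨅ k, fun y => (φ k y : ℝ≥0∞)) :=
    le_withDensity_iInf (fun k => (hφ k).coe_nnreal_ennreal) fun k =>
      Measure.le_iff.2 fun B hB => (withDensity_apply _ hB).symm ▸ h B hB k
  intro B hB
  simpa only [withDensity_apply _ hB, iInf_apply] using hν B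
end

section
/- Suppose the potential-outcomes model holds: (Ω, 𝒜, ℙ) is a probability space, 𝒵 and 𝒳 are nonempty finite types, Z : Ω → 𝒵 is measurable (𝒵 discrete), XP : 𝒵 → Ω → 𝒳 gives the measurable potential treatments, YP : 𝒳 → Ω → Y gives the measurable potential outcomes into a measurable space Y, and the random element ω ↦ ((XP z ω)_{z∈𝒵}, (YP x ω)_{x∈𝒳}) is independent of Z (instrument independence). Suppose there is a measure μ on Y and measurable sub-densities φ : 𝒵 → 𝒳 → Y → ℝ≥0 such that for every z ∈ 𝒵 with ℙ(Z = z) > 0, every x ∈ 𝒳 and every measurable B ⊆ Y, the conditional probability ℙ[{ω | XP (Z ω) ω = x and YP x ω ∈ B} | Z = z] equals ∫_B φ z x dμ. Then for every x ∈ 𝒳, every nonempty subset Z̃ ⊆ 𝒵 with ℙ(Z = z) > 0 for all z ∈ Z̃, and every measurable B ⊆ Y: ℙ {ω | YP x ω ∈ B and XP z ω = x for all z ∈ Z̃} ≤ ∫_B (fun y => min over z ∈ Z̃ of φ z x y) dμ. -/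
/-!
On `{Z = z}` the observed treatment is the potential treatment `XP z`, so by instrument
independence `φ z x` is the density of the law of `YP x` on `{XP z = x}`. The sufficient
takers lie in each of these events, so the law of `YP x` on them is dominated by
`φ z x · μ` for every `z ∈ Zt`; and a measure dominated by `f · μ` and `g · μ` is dominated
by `(f ⊓ g) · μ`, as one sees by splitting along `{f ≤ g}`.
-/

open MeasureTheory ProbabilityTheory
open scoped ENNReal NNReal

namespace MeasureTheory.Measure

variable {α : Type*} [MeasurableSpace α] {ν μ : Measure α}

theorem le_withDensity_inf {f g : α → ℝ≥0∞} (hf : Measurable f) (hg : Measurable g)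
    (hνf : ν ≤ μ.withDensity f) (hνg : ν ≤ μ.withDensity g) :
    ν ≤ μ.withDensity (f ⊓ g) := by
  refine Measure.le_iff.2 fun B hB => ?_
  set C := {a | f a ≤ g a}
  have hC : MeasurableSet C := measurableSet_le hf hg
  rw [withDensity_apply _ hB, ← measure_inter_add_sdiff B hC,
    ← lintegral_inter_add_sdiff _ B hC]
  have hfC : ν (B ∩ C) ≤ ∫⁻ a in B ∩ C, f a ∂μ := by
    simpa only [withDensity_apply _ (hB.inter hC)] using hνf (B ∩ C)
  have hgC : ν (B \ C) ≤ ∫⁻ a in B \ C, g a ∂μ := by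
    simpa only [withDensity_apply _ (hB.diff hC)] using hνg (B \ C)
  calc ν (B ∩ C) + ν (B \ C)
      ≤ ∫⁻ a in B ∩ C, f a ∂μ + ∫⁻ a in B \ C, g a ∂μ := add_le_add hfC hgC
    _ = ∫⁻ a in B ∩ C, (f ⊓ g) a ∂μ + ∫⁻ a in B \ C, (f ⊓ g) a ∂μ := by
      congr 1
      · exact setLIntegral_congr_fun (hB.inter hC) fun a ha => (inf_eq_left.2 ha.2).symm
      · exact setLIntegral_congr_fun (hB.diff hC) fun a ha =>
          (inf_eq_right.2 (le_of_not_ge ha.2)).symm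

theorem le_withDensity_finset_iInf {ι : Type*} {s : Finset ι} (hs : s.Nonempty)
    {f : ι → α → ℝ≥0∞} (hf : ∀ i ∈ s, Measurable (f i))
    (hν : ∀ i ∈ s, ν ≤ μ.withDensity (f i)) :
    ν ≤ μ.withDensity fun a => ⨅ i ∈ s, f i a := by
  classical
  induction hs using Finset.Nonempty.cons_induction with
  | singleton i => simpa only [Finset.iInf_singleton] using hν i (Finset.mem_singleton_self i)
  | cons i s hi hs ih =>
    have hfs : ∀ j ∈ s, Measurable (f j) := fun j hj => hf j (Finset.mem_cons_of_mem hj)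
    have hmeas : Measurable fun a => ⨅ j ∈ s, f j a := by
      simpa only [Finset.mem_coe] using Measurable.biInf (s : Set ι) s.countable_toSet hfs
    have key := le_withDensity_inf (hf i (Finset.mem_cons_self i s)) hmeas
      (hν i (Finset.mem_cons_self i s)) (ih hfs fun j hj => hν j (Finset.mem_cons_of_mem hj))
    simp only [Finset.cons_eq_insert, Finset.iInf_insert]
    exact key

end MeasureTheory.Measure

namespace ProbabilityTheory

variable {Ω β γ : Type*} [MeasurableSpace Ω] [MeasurableSpace β] [MeasurableSpace γ]
  {P : Measure Ω}

theorem IndepFun.cond_preimage_eq [IsFiniteMeasure P] {W : Ω → β} {Z : Ω → γ}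
    (hWZ : IndepFun W Z P) (hZ : Measurable Z) {S : Set β} {t : Set γ}
    (hS : MeasurableSet S) (ht : MeasurableSet t) (hPt : P (Z ⁻¹' t) ≠ 0) :
    P[W ⁻¹' S | Z ⁻¹' t] = P (W ⁻¹' S) := by
  rw [cond_apply (hZ ht), Set.inter_comm, hWZ.measure_inter_preimage_eq_mul _ _ hS ht,
    mul_comm (P (W ⁻¹' S)), ENNReal.inv_mul_cancel_left hPt (measure_ne_top _ _)]

theorem cond_observed_eq_potential [IsFiniteMeasure P] {𝒵 𝒳 Y : Type*}
    [MeasurableSpace 𝒵] [MeasurableSingletonClass 𝒵]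
    [MeasurableSpace 𝒳] [MeasurableSingletonClass 𝒳] [MeasurableSpace Y]
    {Z : Ω → 𝒵} {XP : 𝒵 → Ω → 𝒳} {YP : 𝒳 → Ω → Y} (hZ : Measurable Z)
    (hindep : IndepFun (fun ω => ((fun z => XP z ω), (fun x => YP x ω))) Z P)
    {z : 𝒵} (hz : P (Z ⁻¹' {z}) ≠ 0) (x : 𝒳) {B : Set Y} (hB : MeasurableSet B) :
    P[{ω | XP (Z ω) ω = x ∧ YP x ω ∈ B} | Z ⁻¹' {z}] = P {ω | XP z ω = x ∧ YP x ω ∈ B} := by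
  have hS : MeasurableSet {p : (𝒵 → 𝒳) × (𝒳 → Y) | p.1 z = x ∧ p.2 x ∈ B} :=
    ((measurableSet_singleton x).preimage (f := fun p : (𝒵 → 𝒳) × (𝒳 → Y) => p.1 z)
      (by fun_prop)).inter (hB.preimage (f := fun p : (𝒵 → 𝒳) × (𝒳 → Y) => p.2 x) (by fun_prop))
  have hsz : MeasurableSet (Z ⁻¹' {z}) := hZ (measurableSet_singleton z)
  have hpot := hindep.cond_preimage_eq hZ hS (measurableSet_singleton z) hz
  rw [← cond_inter_self hsz] at hpot ⊢
  refine Eq.trans ?_ hpot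
  congr 1
  ext ω
  simp only [Set.mem_inter_iff, Set.mem_preimage, Set.mem_singleton_iff, Set.mem_ofPred_eq]
  constructor <;> rintro ⟨rfl, h⟩ <;> exact ⟨rfl, h⟩

end ProbabilityTheory

theorem sufficient_takers_bound_general
    {Ω : Type*} [MeasurableSpace Ω] (P : Measure Ω) [IsProbabilityMeasure P]
    {𝒵 : Type*} [MeasurableSpace 𝒵] [MeasurableSingletonClass 𝒵]
    {𝒳 : Type*} [MeasurableSpace 𝒳] [MeasurableSingletonClass 𝒳]
    {Y : Type*} [MeasurableSpace Y] (μ : Measure Y)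
    (Z : Ω → 𝒵) (hZ : Measurable Z)
    (XP : 𝒵 → Ω → 𝒳)
    (YP : 𝒳 → Ω → Y) (hYP : ∀ x, Measurable (YP x))
    (hindep : IndepFun (fun ω => ((fun z => XP z ω), (fun x => YP x ω))) Z P)
    (φ : 𝒵 → 𝒳 → Y → NNReal) (hφ : ∀ z x, Measurable (φ z x))
    (hdens : ∀ z : 𝒵, 0 < P (Z ⁻¹' {z}) → ∀ x : 𝒳, ∀ B : Set Y, MeasurableSet B →
      (ProbabilityTheory.cond P (Z ⁻¹' {z})) {ω | XP (Z ω) ω = x ∧ YP x ω ∈ B} = ∫⁻ y in B, (φ z x y : ℝ≥0∞) ∂μ) :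
    ∀ (x : 𝒳) (Zt : Finset 𝒵), Zt.Nonempty → (∀ z ∈ Zt, 0 < P (Z ⁻¹' {z})) →
      ∀ B : Set Y, MeasurableSet B →
        P {ω | YP x ω ∈ B ∧ ∀ z ∈ Zt, XP z ω = x} ≤
          ∫⁻ y in B, (⨅ z ∈ Zt, (φ z x y : ℝ≥0∞)) ∂μ := by
  intro x Zt hZt hpos B hB
  set takers := {ω | ∀ z ∈ Zt, XP z ω = x}
  have hlaw : ∀ B, MeasurableSet B →
      ((P.restrict takers).map (YP x)) B = P {ω | YP x ω ∈ B ∧ ∀ z ∈ Zt, XP z ω = x} :=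
    fun B hB => by rw [Measure.map_apply (hYP x) hB, Measure.restrict_apply (hYP x hB)]; rfl
  have hdom : ∀ z ∈ Zt, (P.restrict takers).map (YP x) ≤ μ.withDensity fun y => φ z x y := by
    refine fun z hz => Measure.le_iff.2 fun B hB => ?_
    rw [hlaw B hB, withDensity_apply _ hB, ← hdens z (hpos z hz) x B hB,
      cond_observed_eq_potential hZ hindep (hpos z hz).ne' x hB]
    exact measure_mono fun ω hω => ⟨hω.2 z hz, hω.1⟩
  calc P {ω | YP x ω ∈ B ∧ ∀ z ∈ Zt, XP z ω = x}
      = ((P.restrict takers).map (YP x)) B := (hlaw B hB).symm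
    _ ≤ μ.withDensity (fun y => ⨅ z ∈ Zt, (φ z x y : ℝ≥0∞)) B :=
      Measure.le_withDensity_finset_iInf hZt (fun z _ => (hφ z x).coe_nnreal_ennreal) hdom B
    _ = ∫⁻ y in B, (⨅ z ∈ Zt, (φ z x y : ℝ≥0∞)) ∂μ := withDensity_apply _ hB

/-- In the potential-outcomes model with a strictly exogenous discrete
instrument (instrument independence) and the exclusion restriction built in, if the
conditional probability of `{X = x, Y x ∈ B}` given `Z = z` admits the sub-density
`φ z x` with respect to `μ`, then for every treatment value `x`, every nonempty set of
instrument values `Zt` (each taken with positive probability) and every measurable `B`,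
the probability of the sufficient-takers event
`{Y x ∈ B and X z = x for all z ∈ Zt}` is bounded by the integral over `B` of the
pointwise minimum of the sub-densities `φ z x` over `z ∈ Zt`. -/
theorem sufficient_takers_bound
    {Ω : Type*} [MeasurableSpace Ω] (P : Measure Ω) [IsProbabilityMeasure P]
    {𝒵 : Type*} [Fintype 𝒵] [Nonempty 𝒵] [MeasurableSpace 𝒵] [MeasurableSingletonClass 𝒵]
    {𝒳 : Type*} [Fintype 𝒳] [Nonempty 𝒳] [MeasurableSpace 𝒳] [MeasurableSingletonClass 𝒳]
    {Y : Type*} [MeasurableSpace Y] (μ : Measure Y)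
    (Z : Ω → 𝒵) (hZ : Measurable Z)
    (XP : 𝒵 → Ω → 𝒳) (hXP : ∀ z, Measurable (XP z))
    (YP : 𝒳 → Ω → Y) (hYP : ∀ x, Measurable (YP x))
    (hindep : IndepFun (fun ω => ((fun z => XP z ω), (fun x => YP x ω))) Z P)
    (φ : 𝒵 → 𝒳 → Y → NNReal) (hφ : ∀ z x, Measurable (φ z x))
    (hdens : ∀ z : 𝒵, 0 < P (Z ⁻¹' {z}) → ∀ x : 𝒳, ∀ B : Set Y, MeasurableSet B →
      (ProbabilityTheory.cond P (Z ⁻¹' {z})) {ω | XP (Z ω) ω = x ∧ YP x ω ∈ B} = ∫⁻ y in B, (φ z x y : ℝ≥0∞) ∂μ) :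
    ∀ (x : 𝒳) (Zt : Finset 𝒵), Zt.Nonempty → (∀ z ∈ Zt, 0 < P (Z ⁻¹' {z})) →
      ∀ B : Set Y, MeasurableSet B →
        P {ω | YP x ω ∈ B ∧ ∀ z ∈ Zt, XP z ω = x} ≤
          ∫⁻ y in B, (⨅ z ∈ Zt, (φ z x y : ℝ≥0∞)) ∂μ :=
  sufficient_takers_bound_general P μ Z hZ XP YP hYP hindep φ hφ hdens
end

section
/- The following are equivalent. (i) There exists a probability measure g on T that is consistent with the data and whose instrument-response marginal p_g satisfies the linear restrictions: for every m ∈ Fin M, Σ_{tᶻ : Fin 2 → X} A m tᶻ · p_g tᶻ ≤ r m. (ii) There exists a function p : (Fin 2 → X) → ℝ≥0 with Σ_{tᶻ} p tᶻ = 1 such that: for every m ∈ Fin M, Σ_{tᶻ} A m tᶻ · p tᶻ ≤ r m; for every k ∈ Fin 2 and x ∈ X, Σ over tᶻ with tᶻ k = x of p tᶻ = ∫_Y φ k x dμ; and for every x ∈ X, p (fun _ => x) ≤ Ψ x (the mass of always-x takers is bounded by the overlap integral). -/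
/-!
Write `φ k x • μ` for the measure with density `φ k x`. If `g` is consistent, the law of `t.2 x`
on the always-`x` takers lies below both `φ 0 x • μ` and `φ 1 x • μ`, hence below
`min (φ 0 x) (φ 1 x) • μ` (compare on `{φ 0 x ≤ φ 1 x}` and on its complement), so its mass is at
most `Ψ x`.

Conversely, `(p (always x) / Ψ x) • min (φ 0 x) (φ 1 x) • μ` has mass `p (always x)` and lies
below both `φ k x • μ`. Normalising it and the two remainders yields outcome laws for the
always-`x` takers and for the other types with `tz k = x`; by the marginal equations the
remainders carry exactly the mass of those types. Taking for each `tz` the product over `x` of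
these laws and mixing over `tz` with weights `p` gives `g`.
-/

open MeasureTheory
open scoped ENNReal NNReal
open Set

namespace MeasureTheory.Measure

variable {Y : Type*} [MeasurableSpace Y] {μ : Measure Y} {f g : Y → ℝ≥0∞}

lemma le_withDensity_min {ν : Measure Y} (hf : Measurable f) (hg : Measurable g)
    (hνf : ν ≤ μ.withDensity f) (hνg : ν ≤ μ.withDensity g) :
    ν ≤ μ.withDensity (fun y => min (f y) (g y)) := by
  refine le_iff.2 fun s hs => ?_
  set S := {y | f y ≤ g y}
  have hS : MeasurableSet S := measurableSet_le hf hg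
  calc ν s = ν (s ∩ S) + ν (s \ S) := (measure_inter_add_sdiff s hS).symm
    _ ≤ μ.withDensity f (s ∩ S) + μ.withDensity g (s \ S) := add_le_add (hνf _) (hνg _)
    _ = μ.withDensity (fun y => min (f y) (g y)) (s ∩ S) +
        μ.withDensity (fun y => min (f y) (g y)) (s \ S) := by
      simp only [withDensity_apply _ (hs.inter hS), withDensity_apply _ (hs.diff hS)]
      congr 1
      · exact setLIntegral_congr_fun (hs.inter hS) fun y hy => (min_eq_left hy.2).symm
      · exact setLIntegral_congr_fun (hs.diff hS) fun y hy =>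
          (min_eq_right (not_le.1 hy.2).le).symm
    _ = _ := measure_inter_add_sdiff s hS

lemma exists_le_withDensity_of_le_lintegral_min {a : ℝ≥0∞}
    (ha : a ≤ ∫⁻ y, min (f y) (g y) ∂μ) (hfin : ∫⁻ y, min (f y) (g y) ∂μ ≠ ∞) :
    ∃ ν : Measure Y, ν univ = a ∧ ν ≤ μ.withDensity f ∧ ν ≤ μ.withDensity g := by
  set Ψ := ∫⁻ y, min (f y) (g y) ∂μ
  have hc : a / Ψ ≤ 1 := ENNReal.div_le_of_le_mul (by rwa [one_mul])
  have hle : ∀ h : Y → ℝ≥0∞, (fun y => min (f y) (g y)) ≤ h →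
      (a / Ψ) • μ.withDensity (fun y => min (f y) (g y)) ≤ μ.withDensity h := fun h hh =>
    le_iff'.2 fun s => (mul_le_of_le_one_left bot_le hc).trans
      (withDensity_mono (Filter.Eventually.of_forall hh) s)
  refine ⟨(a / Ψ) • μ.withDensity (fun y => min (f y) (g y)), ?_,
    hle f fun y => min_le_left _ _, hle g fun y => min_le_right _ _⟩
  rw [smul_apply, withDensity_apply _ MeasurableSet.univ, restrict_univ, smul_eq_mul]
  rcases eq_or_ne Ψ 0 with h | h
  · simp [h, le_antisymm (h ▸ ha) bot_le]
  · exact ENNReal.div_mul_cancel h hfin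

lemma exists_probabilityMeasure_smul_eq [Nonempty Y] (ν : Measure Y) [IsFiniteMeasure ν] :
    ∃ q : ProbabilityMeasure Y, ν univ • (q : Measure Y) = ν := by
  rcases eq_zero_or_neZero ν with rfl | _
  · exact ⟨⟨dirac (Classical.arbitrary Y), inferInstance⟩, by simp⟩
  · refine ⟨⟨(ν univ)⁻¹ • ν, inferInstance⟩, ?_⟩
    change ν univ • (ν univ)⁻¹ • ν = ν
    rw [smul_smul, ENNReal.mul_inv_cancel (NeZero.ne _) (measure_ne_top _ _), one_smul]

lemma exists_smul_add_smul_eq_withDensity [Nonempty Y] {f : Fin 2 → Y → ℝ≥0∞} {a : ℝ≥0∞}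
    {b : Fin 2 → ℝ≥0∞} (ha : a ≤ ∫⁻ y, min (f 0 y) (f 1 y) ∂μ)
    (hab : ∀ k, a + b k = ∫⁻ y, f k y ∂μ) (hfin : ∀ k, ∫⁻ y, f k y ∂μ ≠ ∞) :
    ∃ (qA : ProbabilityMeasure Y) (q : Fin 2 → ProbabilityMeasure Y),
      ∀ k, a • (qA : Measure Y) + b k • (q k : Measure Y) = μ.withDensity (f k) := by
  have hΨ : ∫⁻ y, min (f 0 y) (f 1 y) ∂μ ≠ ∞ :=
    ne_top_of_le_ne_top (hfin 0) (lintegral_mono fun y => min_le_left _ _)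
  obtain ⟨ν, hν, hν0, hν1⟩ := exists_le_withDensity_of_le_lintegral_min ha hΨ
  have hνf : ∀ k, ν ≤ μ.withDensity (f k) := Fin.forall_fin_two.2 ⟨hν0, hν1⟩
  have : IsFiniteMeasure ν := ⟨hν ▸ (ne_top_of_le_ne_top hΨ ha).lt_top⟩
  have (k : Fin 2) : IsFiniteMeasure (μ.withDensity (f k)) :=
    isFiniteMeasure_withDensity (hfin k)
  obtain ⟨qA, hqA⟩ := exists_probabilityMeasure_smul_eq ν
  choose q hq using fun k => exists_probabilityMeasure_smul_eq (μ.withDensity (f k) - ν)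
  refine ⟨qA, q, fun k => ?_⟩
  have hb : b k = (μ.withDensity (f k) - ν) univ := by
    rw [sub_apply .univ (hνf k), withDensity_apply _ .univ, restrict_univ, hν, ← hab k,
      ENNReal.add_sub_cancel_left (ne_top_of_le_ne_top hΨ ha)]
  rw [← hν, hqA, hb, hq, add_comm, sub_add_cancel_of_le (hνf k)]

section Mixture

variable {S E : Type*} [MeasurableSpace S] [MeasurableSingletonClass S] [MeasurableSpace E]

lemma sum_measure_fst_eq (g : Measure (S × E)) (F : Finset S) :
    ∑ s ∈ F, g {t | t.1 = s} = g {t | t.1 ∈ F} :=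
  sum_measure_preimage_singleton F fun s _ => measurable_fst (measurableSet_singleton s)

variable [Fintype S]

noncomputable def mixture (p : S → ℝ≥0∞) (ν : S → Measure E) : Measure (S × E) :=
  ∑ s, p s • (ν s).map (Prod.mk s)

lemma mixture_apply_setOf (p : S → ℝ≥0∞) (ν : S → Measure E) (P : S → Prop) [DecidablePred P]
    {C : Set E} (hC : MeasurableSet C) :
    mixture p ν {t | P t.1 ∧ t.2 ∈ C} = ∑ s ∈ Finset.univ.filter P, p s * ν s C := by
  have hPC : MeasurableSet {t : S × E | P t.1 ∧ t.2 ∈ C} :=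
    (Set.toFinite {s | P s}).measurableSet.prod hC
  rw [mixture, finsetSum_apply, Finset.sum_filter]
  refine Finset.sum_congr rfl fun s _ => ?_
  rw [smul_apply, map_apply measurable_prodMk_left hPC, smul_eq_mul]
  by_cases hs : P s <;> simp [hs, Set.preimage]

lemma mixture_fst_eq (p : S → ℝ≥0∞) (ν : S → Measure E) [∀ s, IsProbabilityMeasure (ν s)]
    (s : S) : mixture p ν {t | t.1 = s} = p s := by
  classical
  simpa [Finset.sum_filter] using mixture_apply_setOf p ν (· = s) MeasurableSet.univ

lemma isProbabilityMeasure_mixture (p : S → ℝ≥0∞) (ν : S → Measure E)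
    [∀ s, IsProbabilityMeasure (ν s)] (hp : ∑ s, p s = 1) : IsProbabilityMeasure (mixture p ν) := by
  constructor
  simpa [hp] using mixture_apply_setOf p ν (fun _ => True) MeasurableSet.univ

end Mixture

end MeasureTheory.Measure

section BinaryInstrument

variable {X : Type*} [DecidableEq X]

/-- The law of `t.2 x` for instrument-response type `tz`; its value on types with
`tz 0 ≠ x ∧ tz 1 ≠ x` is irrelevant. -/
def responseLaw {α : Type*} (qA : X → α) (q : X → Fin 2 → α) (tz : Fin 2 → X) (x : X) : α :=
  if tz = (fun _ => x) then qA x else if tz 0 = x then q x 0 else q x 1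

lemma responseLaw_of_ne_const {α : Type*} (qA : X → α) (q : X → Fin 2 → α) {tz : Fin 2 → X}
    {k : Fin 2} {x : X} (hk : tz k = x) (hne : tz ≠ fun _ => x) :
    responseLaw qA q tz x = q x k := by
  rw [responseLaw, if_neg hne]
  fin_cases k
  · simp_all
  · have h0 : tz 0 ≠ x := fun h0 => hne (funext (Fin.forall_fin_two.2 ⟨h0, hk⟩))
    simp_all

lemma sum_filter_mul_responseLaw [Fintype X] {α : Type*} (qA : X → α) (q : X → Fin 2 → α)
    (p : (Fin 2 → X) → ℝ≥0∞) (F : α → ℝ≥0∞) (k : Fin 2) (x : X) :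
    ∑ tz ∈ Finset.univ.filter (fun tz : Fin 2 → X => tz k = x),
        p tz * F (responseLaw qA q tz x) =
      p (fun _ => x) * F (qA x) +
        (∑ tz ∈ (Finset.univ.filter (fun tz : Fin 2 → X => tz k = x)).erase (fun _ => x), p tz) *
          F (q x k) := by
  have hmem : (fun _ => x) ∈ Finset.univ.filter (fun tz : Fin 2 → X => tz k = x) := by simp
  rw [← Finset.add_sum_erase _ _ hmem, Finset.sum_mul, responseLaw, if_pos rfl]
  congr 1
  refine Finset.sum_congr rfl fun tz htz => ?_
  rw [Finset.mem_erase, Finset.mem_filter] at htz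
  rw [responseLaw_of_ne_const qA q htz.2.2 htz.1]

end BinaryInstrument

section ResponseTypes

variable {Y : Type*} [MeasurableSpace Y] {X Z : Type*} [MeasurableSpace X]

def IsConsistent (μ : Measure Y) (φ : Z → X → Y → ℝ≥0)
    (g : Measure ((Z → X) × (X → Y))) : Prop :=
  ∀ (k : Z) (x : X) (B : Set Y), MeasurableSet B →
    g {t | t.1 k = x ∧ t.2 x ∈ B} = ∫⁻ y in B, (φ k x y : ℝ≥0∞) ∂μ

variable {μ : Measure Y} {φ : Z → X → Y → ℝ≥0} {g : Measure ((Z → X) × (X → Y))}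

lemma IsConsistent.sum_measure_fst [MeasurableSingletonClass X] [Fintype X] [Fintype Z]
    [DecidableEq Z] [DecidableEq X]
    (hg : IsConsistent μ φ g) (k : Z) (x : X) :
    ∑ tz ∈ Finset.univ.filter (fun tz : Z → X => tz k = x), g {t | t.1 = tz} =
      ∫⁻ y, (φ k x y : ℝ≥0∞) ∂μ := by
  rw [← setLIntegral_univ, ← hg k x univ .univ, Measure.sum_measure_fst_eq]
  congr 1
  ext t
  simp

lemma IsConsistent.measure_fst_const_le (hg : IsConsistent μ φ g)
    (hφ : ∀ k x, Measurable (φ k x)) (k₀ k₁ : Z) (x : X) :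
    g {t | t.1 = fun _ => x} ≤ ∫⁻ y, min (φ k₀ x y : ℝ≥0∞) (φ k₁ x y) ∂μ := by
  set ν := (g.restrict {t | t.1 = fun _ => x}).map (fun t => t.2 x)
  have hmeas : Measurable fun t : (Z → X) × (X → Y) => t.2 x :=
    (measurable_pi_apply x).comp measurable_snd
  have hν (k : Z) : ν ≤ μ.withDensity (fun y => φ k x y) := Measure.le_iff.2 fun B hB => by
    rw [Measure.map_apply hmeas hB, Measure.restrict_apply (hmeas hB), withDensity_apply _ hB,
      ← hg k x B hB]
    exact measure_mono fun t ⟨hB, hx⟩ => ⟨congrFun hx k, hB⟩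
  have hmin := Measure.le_withDensity_min (hφ k₀ x).coe_nnreal_ennreal
    (hφ k₁ x).coe_nnreal_ennreal (hν k₀) (hν k₁) univ
  simpa [ν, Measure.map_apply hmeas .univ] using hmin

open Measure in
lemma exists_isConsistent_mixture [Nonempty Y] [Fintype X] [DecidableEq X]
    [MeasurableSingletonClass X] {φ : Fin 2 → X → Y → ℝ≥0} (p : (Fin 2 → X) → ℝ≥0)
    (hmarg : ∀ (k : Fin 2) (x : X),
      ((∑ tz ∈ Finset.univ.filter (fun tz : Fin 2 → X => tz k = x), p tz : ℝ≥0) : ℝ≥0∞) =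
        ∫⁻ y, (φ k x y : ℝ≥0∞) ∂μ)
    (hover : ∀ x : X, ((p (fun _ => x) : ℝ≥0) : ℝ≥0∞) ≤
      ∫⁻ y, ((min (φ 0 x y) (φ 1 x y) : ℝ≥0) : ℝ≥0∞) ∂μ) :
    ∃ ν : (Fin 2 → X) → ProbabilityMeasure (X → Y),
      IsConsistent μ φ (mixture (fun tz => p tz) (fun tz => ν tz)) := by
  have hsplit (k : Fin 2) (x : X) : (p (fun _ => x) : ℝ≥0∞) +
      ∑ tz ∈ (Finset.univ.filter (fun tz : Fin 2 → X => tz k = x)).erase (fun _ => x),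
        (p tz : ℝ≥0∞) = ∫⁻ y, (φ k x y : ℝ≥0∞) ∂μ := by
    rw [← hmarg k x, ENNReal.ofNNReal_finsetSum,
      Finset.add_sum_erase _ (fun tz => (p tz : ℝ≥0∞)) (by simp)]
  have hdec (x : X) := exists_smul_add_smul_eq_withDensity (f := fun k y => φ k x y)
    (by simpa [ENNReal.coe_min] using hover x) (hsplit · x)
    (fun k => hmarg k x ▸ ENNReal.coe_ne_top)
  choose qA q hdec using hdec
  refine ⟨fun tz => ⟨Measure.pi fun x => (responseLaw qA q tz x : ProbabilityMeasure Y),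
    inferInstance⟩, fun k x B hB => ?_⟩
  have hB' : MeasurableSet {f : X → Y | f x ∈ B} := measurable_pi_apply x hB
  refine (mixture_apply_setOf _ _ (fun tz : Fin 2 → X => tz k = x) hB').trans ?_
  calc _ = ∑ tz ∈ Finset.univ.filter (fun tz : Fin 2 → X => tz k = x),
        (p tz : ℝ≥0∞) * ((responseLaw qA q tz x : ProbabilityMeasure Y) : Measure Y) B :=
      Finset.sum_congr rfl fun tz _ => congrArg _
        ((measurePreserving_eval _ x).measure_preimage hB.nullMeasurableSet)
    _ = _ := by
      rw [sum_filter_mul_responseLaw _ _ _ (fun ν : ProbabilityMeasure Y => (ν : Measure Y) B),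
        ← withDensity_apply _ hB, ← hdec x k]
      simp only [Measure.add_apply, Measure.smul_apply, smul_eq_mul]

end ResponseTypes

theorem sharp_binary_instrument_general
    {Y : Type*} [MeasurableSpace Y] [Nonempty Y] (μ : Measure Y)
    {X : Type*} [Fintype X] [DecidableEq X]
    [MeasurableSpace X] [MeasurableSingletonClass X]
    (φ : Fin 2 → X → Y → NNReal) (hφ : ∀ k x, Measurable (φ k x))
    (M : ℕ) (A : Fin M → (Fin 2 → X) → ℝ) (r : Fin M → ℝ) :
    (∃ g : Measure ((Fin 2 → X) × (X → Y)), IsProbabilityMeasure g ∧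
      (∀ (k : Fin 2) (x : X) (B : Set Y), MeasurableSet B →
        g {t | t.1 k = x ∧ t.2 x ∈ B} = ∫⁻ y in B, (φ k x y : ℝ≥0∞) ∂μ) ∧
      (∀ m : Fin M, ∑ tz : Fin 2 → X, A m tz * (g {t | t.1 = tz}).toReal ≤ r m))
    ↔
    (∃ p : (Fin 2 → X) → NNReal, ∑ tz : Fin 2 → X, p tz = 1 ∧
      (∀ m : Fin M, ∑ tz : Fin 2 → X, A m tz * (p tz : ℝ) ≤ r m) ∧
      (∀ (k : Fin 2) (x : X),
        ((∑ tz ∈ Finset.univ.filter (fun tz : Fin 2 → X => tz k = x), p tz : NNReal) : ℝ≥0∞) =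
          ∫⁻ y, (φ k x y : ℝ≥0∞) ∂μ) ∧
      (∀ x : X, ((p (fun _ => x) : NNReal) : ℝ≥0∞) ≤
        ∫⁻ y, ((min (φ 0 x y) (φ 1 x y) : NNReal) : ℝ≥0∞) ∂μ)) := by
  constructor
  · rintro ⟨g, hg, hcons, hlin⟩
    have hfst (tz : Fin 2 → X) : ((g {t | t.1 = tz}).toNNReal : ℝ≥0∞) = g {t | t.1 = tz} :=
      ENNReal.coe_toNNReal (measure_ne_top _ _)
    refine ⟨fun tz => (g {t | t.1 = tz}).toNNReal, ?_, hlin, fun k x => ?_, fun x => ?_⟩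
    · apply ENNReal.coe_injective
      rw [ENNReal.ofNNReal_finsetSum, Finset.sum_congr rfl fun tz _ => hfst tz,
        Measure.sum_measure_fst_eq]
      simp
    · rw [ENNReal.ofNNReal_finsetSum, Finset.sum_congr rfl fun tz _ => hfst tz]
      exact IsConsistent.sum_measure_fst hcons k x
    · simpa [hfst, ENNReal.coe_min] using IsConsistent.measure_fst_const_le hcons hφ 0 1 x
  · rintro ⟨p, hsum, hlin, hmarg, hover⟩
    obtain ⟨ν, hν⟩ := exists_isConsistent_mixture p hmarg hover
    refine ⟨_, Measure.isProbabilityMeasure_mixture _ _ (by exact_mod_cast hsum), hν,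
      fun m => ?_⟩
    simpa [Measure.mixture_fst_eq] using hlin m

/-- **Theorem 1, sharp observable implications of binary instruments.**
For a binary instrument, the existence of a probability measure on response types that is
consistent with the observed sub-densities and whose instrument-response marginal satisfies
the linear restrictions `A p ≤ r` is equivalent to the existence of a distribution `p` over
instrument-response types satisfying the linear restrictions, matching the observed
conditional treatment probabilities, and with the mass of always-`x` takers bounded by the
overlap `Ψ x = ∫ min (φ 0 x) (φ 1 x) dμ` for every treatment value `x`. -/
theorem sharp_binary_instrument
    {Y : Type*} [MeasurableSpace Y] [Nonempty Y] (μ : Measure Y) [SigmaFinite μ]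
    {X : Type*} [Fintype X] [Nonempty X] [DecidableEq X]
    [MeasurableSpace X] [MeasurableSingletonClass X]
    (φ : Fin 2 → X → Y → NNReal) (hφ : ∀ k x, Measurable (φ k x))
    (hmass : ∀ k : Fin 2, ∑ x : X, ∫⁻ y, (φ k x y : ℝ≥0∞) ∂μ = 1)
    (M : ℕ) (A : Fin M → (Fin 2 → X) → ℝ) (r : Fin M → ℝ) :
    (∃ g : Measure ((Fin 2 → X) × (X → Y)), IsProbabilityMeasure g ∧
      (∀ (k : Fin 2) (x : X) (B : Set Y), MeasurableSet B →
        g {t | t.1 k = x ∧ t.2 x ∈ B} = ∫⁻ y in B, (φ k x y : ℝ≥0∞) ∂μ) ∧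
      (∀ m : Fin M, ∑ tz : Fin 2 → X, A m tz * (g {t | t.1 = tz}).toReal ≤ r m))
    ↔
    (∃ p : (Fin 2 → X) → NNReal, ∑ tz : Fin 2 → X, p tz = 1 ∧
      (∀ m : Fin M, ∑ tz : Fin 2 → X, A m tz * (p tz : ℝ) ≤ r m) ∧
      (∀ (k : Fin 2) (x : X),
        ((∑ tz ∈ Finset.univ.filter (fun tz : Fin 2 → X => tz k = x), p tz : NNReal) : ℝ≥0∞) =
          ∫⁻ y, (φ k x y : ℝ≥0∞) ∂μ) ∧
      (∀ x : X, ((p (fun _ => x) : NNReal) : ℝ≥0∞) ≤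
        ∫⁻ y, ((min (φ 0 x y) (φ 1 x y) : NNReal) : ℝ≥0∞) ∂μ)) :=
  sharp_binary_instrument_general μ φ hφ M A r
end

section
/- Let X be a nonempty finite type, let q₀, q₁ : X → ℝ≥0 satisfy Σ_x q₀ x = Σ_x q₁ x = 1, and let R ⊆ X × X; write x ⊵ x' for (x,x') ∈ R and Lᶜ(S) = {x' ∈ X | ∃ s ∈ S, ¬(s ⊵ x')} for S ⊆ X. Then there exists p : X × X → ℝ≥0 with p(x,x') = 0 for every (x,x') ∈ R, Σ_{x'} p(x,x') = q₀ x for every x, and Σ_x p(x,x') = q₁ x' for every x', if and only if for every S ⊆ X: Σ_{x ∈ S} q₀ x ≤ Σ_{x' ∈ Lᶜ(S)} q₁ x'. -/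
/-!
Necessity holds because a plan sends all the mass of `S` into `relImage E S`. Sufficiency is a
fractional Hall argument by induction on the total size of the supports of `q₀` and `q₁`. Pick
`x₀` with `q₀ x₀ > 0` and, by Hall's condition for `{x₀}`, an allowed `y₀` with `q₁ y₀ > 0`, and
move from `x₀` to `y₀` the largest amount `ε` that keeps Hall's condition. Then either `x₀` or
`y₀` is exhausted, so a support shrinks, or some set `S` avoiding `x₀` but meeting the support of
`q₀` has become tight; in that case the problem splits into the smaller problems
`S → relImage E S` and `Sᶜ → (relImage E S)ᶜ`, which both inherit Hall's condition.
With equal total masses the capacities `q₁` are attained exactly.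
-/

open Finset Function

section Transport

variable {𝕜 α β : Type*} {E : α → β → Prop}

section RelImage

variable [Fintype β] [DecidableRel E]

variable (E) in
def relImage (S : Finset α) : Finset β := {y | ∃ x ∈ S, E x y}

@[simp]
lemma mem_relImage {S : Finset α} {y : β} : y ∈ relImage E S ↔ ∃ x ∈ S, E x y := by
  simp [relImage]

lemma relImage_mono {S T : Finset α} (h : S ⊆ T) : relImage E S ⊆ relImage E T := by
  intro y
  simp only [mem_relImage]
  exact fun ⟨x, hx, hxy⟩ ↦ ⟨x, h hx, hxy⟩

lemma relImage_union [DecidableEq α] [DecidableEq β] (S T : Finset α) :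
    relImage E (S ∪ T) = relImage E S ∪ relImage E T := by
  ext y
  simp [or_and_right, exists_or]

end RelImage

section Defs

variable [Fintype α] [Fintype β] [AddCommMonoid 𝕜] [PartialOrder 𝕜]

variable (E) [DecidableRel E] in
def HallCondition (q₀ : α → 𝕜) (q₁ : β → 𝕜) : Prop :=
  ∀ S : Finset α, ∑ x ∈ S, q₀ x ≤ ∑ y ∈ relImage E S, q₁ y

variable (E) in
structure IsTransportPlan (p : α → β → 𝕜) (q₀ : α → 𝕜) (q₁ : β → 𝕜) : Prop where
  nonneg : 0 ≤ p
  eq_zero_of_not_rel : ∀ x y, ¬ E x y → p x y = 0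
  sum_row : ∀ x, ∑ y, p x y = q₀ x
  sum_col_le : ∀ y, ∑ x, p x y ≤ q₁ y

variable {p p' : α → β → 𝕜} {q₀ q₀' : α → 𝕜} {q₁ q₁' : β → 𝕜}

namespace IsTransportPlan

lemma zero (hq₁ : 0 ≤ q₁) : IsTransportPlan E 0 0 q₁ where
  nonneg := le_rfl
  eq_zero_of_not_rel _ _ _ := rfl
  sum_row _ := by simp
  sum_col_le y := by simpa using hq₁ y

lemma single [DecidableEq α] [DecidableEq β] {x₀ : α} {y₀ : β} {ε : 𝕜} (h : E x₀ y₀)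
    (hε : 0 ≤ ε) :
    IsTransportPlan E (Pi.single x₀ (Pi.single y₀ ε)) (Pi.single x₀ ε) (Pi.single y₀ ε) where
  nonneg x y := by
    rcases eq_or_ne x x₀ with rfl | hx
    · rcases eq_or_ne y y₀ with rfl | hy <;> simp [*]
    · simp [hx]
  eq_zero_of_not_rel x y hxy := by
    rcases eq_or_ne x x₀ with rfl | hx
    · rcases eq_or_ne y y₀ with rfl | hy
      · exact absurd h hxy
      · simp [hy]
    · simp [hx]
  sum_row x := by
    rcases eq_or_ne x x₀ with rfl | hx <;> simp [*]
  sum_col_le y := by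
    rw [← Finset.sum_apply, Fintype.sum_pi_single']

variable [IsOrderedAddMonoid 𝕜]

lemma add (hp : IsTransportPlan E p q₀ q₁) (hp' : IsTransportPlan E p' q₀' q₁') :
    IsTransportPlan E (p + p') (q₀ + q₀') (q₁ + q₁') where
  nonneg := add_nonneg hp.nonneg hp'.nonneg
  eq_zero_of_not_rel x y h := by
    simp [hp.eq_zero_of_not_rel x y h, hp'.eq_zero_of_not_rel x y h]
  sum_row x := by simp [sum_add_distrib, hp.sum_row, hp'.sum_row]
  sum_col_le y := by
    simpa [sum_add_distrib] using add_le_add (hp.sum_col_le y) (hp'.sum_col_le y)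

lemma hallCondition [DecidableRel E] (hp : IsTransportPlan E p q₀ q₁) : HallCondition E q₀ q₁ := by
  intro S
  calc ∑ x ∈ S, q₀ x = ∑ x ∈ S, ∑ y ∈ relImage E S, p x y := by
        refine sum_congr rfl fun x hx ↦ ?_
        rw [← hp.sum_row x]
        refine (sum_subset (subset_univ _) fun y _ hy ↦ hp.eq_zero_of_not_rel x y ?_).symm
        exact fun hxy ↦ hy (mem_relImage.2 ⟨x, hx, hxy⟩)
    _ = ∑ y ∈ relImage E S, ∑ x ∈ S, p x y := sum_comm
    _ ≤ ∑ y ∈ relImage E S, ∑ x, p x y :=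
        sum_le_sum fun y _ ↦ sum_le_sum_of_subset_of_nonneg (subset_univ S)
          fun x _ _ ↦ hp.nonneg x y
    _ ≤ ∑ y ∈ relImage E S, q₁ y := sum_le_sum fun y _ ↦ hp.sum_col_le y

end IsTransportPlan

lemma IsTransportPlan.sum_col [IsOrderedCancelAddMonoid 𝕜] (hp : IsTransportPlan E p q₀ q₁)
    (hq : ∑ x, q₀ x = ∑ y, q₁ y) (y : β) : ∑ x, p x y = q₁ y := by
  have htot : ∑ y, ∑ x, p x y = ∑ y, q₁ y := by
    rw [sum_comm, ← hq]
    exact sum_congr rfl fun x _ ↦ hp.sum_row x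
  exact (sum_eq_sum_iff_of_le fun y _ ↦ hp.sum_col_le y).1 htot y (mem_univ y)

end Defs

section Support

variable {ι M : Type*}

lemma support_sub_single_subset [DecidableEq ι] [AddGroup M] {f : ι → M} {a : ι} (ha : f a ≠ 0)
    (b : M) : support (f - Pi.single a b) ⊆ support f := by
  intro x hx
  rcases eq_or_ne x a with rfl | hxa
  · exact ha
  · simpa [hxa] using hx

lemma sub_single_nonneg [DecidableEq ι] [AddCommGroup M] [PartialOrder M] [IsOrderedAddMonoid M]
    {f : ι → M} (hf : 0 ≤ f) {a : ι} {b : M} (hb : b ≤ f a) : 0 ≤ f - Pi.single a b := by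
  intro x
  rcases eq_or_ne x a with rfl | hxa
  · simpa using hb
  · simpa [hxa] using hf x

variable [Finite ι]

lemma ncard_support_indicator_le [Zero M] (s : Set ι) (f : ι → M) :
    (support (s.indicator f)).ncard ≤ (support f).ncard := by
  rw [Set.support_indicator]
  exact Set.ncard_le_ncard Set.inter_subset_right

lemma ncard_support_indicator_lt [Zero M] {s : Set ι} {f : ι → M} (h : ∃ x ∉ s, f x ≠ 0) :
    (support (s.indicator f)).ncard < (support f).ncard := by
  obtain ⟨x, hxs, hfx⟩ := h
  rw [Set.support_indicator]
  exact Set.ncard_lt_ncard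
    (Set.inter_subset_right.ssubset_of_not_subset fun hsub ↦ hxs (hsub hfx).1)

variable [DecidableEq ι] [AddGroup M]

lemma ncard_support_sub_single_le {f : ι → M} {a : ι} (ha : f a ≠ 0) (b : M) :
    (support (f - Pi.single a b)).ncard ≤ (support f).ncard :=
  Set.ncard_le_ncard (support_sub_single_subset ha b)

lemma ncard_support_sub_single_self_lt {f : ι → M} {a : ι} (ha : f a ≠ 0) :
    (support (f - Pi.single a (f a))).ncard < (support f).ncard :=
  Set.ncard_lt_ncard ((support_sub_single_subset ha _).ssubset_of_not_subset
    fun hsub ↦ by simpa using hsub ha)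

end Support

section Sufficiency

variable [Fintype β] [CommRing 𝕜] [LinearOrder 𝕜] [IsStrictOrderedRing 𝕜]
  {q₀ : α → 𝕜} {q₁ : β → 𝕜}

lemma IsTransportPlan.of_sub_single [Fintype α] [DecidableEq α] [DecidableEq β]
    {p : α → β → 𝕜} {x₀ : α} {y₀ : β} {ε : 𝕜}
    (hp : IsTransportPlan E p (q₀ - Pi.single x₀ ε) (q₁ - Pi.single y₀ ε)) (h : E x₀ y₀)
    (hε : 0 ≤ ε) : IsTransportPlan E (p + Pi.single x₀ (Pi.single y₀ ε)) q₀ q₁ := by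
  simpa using hp.add (.single h hε)

variable [DecidableRel E]

lemma exists_mem_ne_zero_of_add_eq (hq₁ : 0 ≤ q₁) {S : Finset α} {y₀ : β} {ε : 𝕜}
    (hy₀ : y₀ ∈ relImage E S) (hS : ∑ x ∈ S, q₀ x + ε = ∑ y ∈ relImage E S, q₁ y)
    (hε : ε < q₁ y₀) : ∃ x ∈ S, q₀ x ≠ 0 := by
  by_contra! hzero
  have : q₁ y₀ ≤ ∑ y ∈ relImage E S, q₁ y := single_le_sum (fun y _ ↦ hq₁ y) hy₀
  rw [sum_eq_zero hzero] at hS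
  linarith

namespace HallCondition

lemma indicator (h : HallCondition E q₀ q₁) (hq₁ : 0 ≤ q₁) (T : Finset α) :
    HallCondition E ((T : Set α).indicator q₀) ((relImage E T : Set β).indicator q₁) := by
  classical
  intro S
  rw [sum_indicator_eq_sum_inter, sum_indicator_eq_sum_inter]
  have himage : relImage E (S ∩ T) ⊆ relImage E S ∩ relImage E T :=
    subset_inter (relImage_mono inter_subset_left) (relImage_mono inter_subset_right)
  exact (h (S ∩ T)).trans (sum_le_sum_of_subset_of_nonneg himage fun y _ _ ↦ hq₁ y)

lemma indicator_compl [Fintype α] [DecidableEq α] [DecidableEq β] (h : HallCondition E q₀ q₁)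
    {T : Finset α} (hT : ∑ x ∈ T, q₀ x = ∑ y ∈ relImage E T, q₁ y) :
    HallCondition E ((↑Tᶜ : Set α).indicator q₀) ((↑(relImage E T)ᶜ : Set β).indicator q₁) := by
  intro S
  rw [sum_indicator_eq_sum_inter, sum_indicator_eq_sum_inter, ← sdiff_eq_inter_compl,
    ← sdiff_eq_inter_compl]
  have hS := h (S ∪ T)
  rw [relImage_union, ← sum_sdiff (subset_union_right (s₁ := S)),
    ← sum_sdiff (subset_union_right (s₁ := relImage E S)), union_sdiff_right,
    union_sdiff_right, hT] at hS
  exact le_of_add_le_add_right hS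

lemma sub_single [DecidableEq α] [DecidableEq β] (h : HallCondition E q₀ q₁) {x₀ : α} {y₀ : β}
    {ε : 𝕜} (hxy : E x₀ y₀)
    (hε : ∀ S, x₀ ∉ S → y₀ ∈ relImage E S → ∑ x ∈ S, q₀ x + ε ≤ ∑ y ∈ relImage E S, q₁ y) :
    HallCondition E (q₀ - Pi.single x₀ ε) (q₁ - Pi.single y₀ ε) := by
  intro S
  simp only [Pi.sub_apply, sum_sub_distrib, sum_pi_single']
  by_cases hx₀ : x₀ ∈ S
  · have hy₀ : y₀ ∈ relImage E S := mem_relImage.2 ⟨x₀, hx₀, hxy⟩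
    simpa [hx₀, hy₀] using h S
  · by_cases hy₀ : y₀ ∈ relImage E S
    · simpa [hx₀, hy₀, le_sub_iff_add_le] using hε S hx₀ hy₀
    · simpa [hx₀, hy₀] using h S

lemma exists_rel_pos (h : HallCondition E q₀ q₁) {x₀ : α} (hx₀ : 0 < q₀ x₀) :
    ∃ y, E x₀ y ∧ 0 < q₁ y := by
  by_contra! hneg
  have hsum := h {x₀}
  rw [sum_singleton] at hsum
  have : ∑ y ∈ relImage E {x₀}, q₁ y ≤ 0 :=
    sum_nonpos fun y hy ↦ hneg y (by simpa using hy)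
  exact (hx₀.trans_le (hsum.trans this)).false

lemma exists_transfer_amount [Fintype α] (h : HallCondition E q₀ q₁) {x₀ : α} {y₀ : β}
    (h₀ : 0 ≤ q₀ x₀) (h₁ : 0 ≤ q₁ y₀) :
    ∃ ε, 0 ≤ ε ∧ ε ≤ q₀ x₀ ∧ ε ≤ q₁ y₀ ∧
      (∀ S, x₀ ∉ S → y₀ ∈ relImage E S → ∑ x ∈ S, q₀ x + ε ≤ ∑ y ∈ relImage E S, q₁ y) ∧
      (ε = q₀ x₀ ∨ ε = q₁ y₀ ∨
        ∃ S, x₀ ∉ S ∧ y₀ ∈ relImage E S ∧ ∑ x ∈ S, q₀ x + ε = ∑ y ∈ relImage E S, q₁ y) := by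
  classical
  let slack (S : Finset α) : 𝕜 := ∑ y ∈ relImage E S, q₁ y - ∑ x ∈ S, q₀ x
  let V : Finset 𝕜 := insert (q₀ x₀) <| insert (q₁ y₀) <|
    ({S | x₀ ∉ S ∧ y₀ ∈ relImage E S} : Finset (Finset α)).image slack
  have hV : V.Nonempty := insert_nonempty _ _
  refine ⟨V.min' hV, ?_, V.min'_le _ (by simp [V]), V.min'_le _ (by simp [V]), fun S hx hy ↦ ?_, ?_⟩
  · refine V.le_min' _ _ fun v hv ↦ ?_
    simp only [V, mem_insert, mem_image, mem_filter_univ] at hv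
    rcases hv with rfl | rfl | ⟨S, -, rfl⟩
    exacts [h₀, h₁, sub_nonneg.2 (h S)]
  · have := V.min'_le (slack S) (by simp only [V, mem_insert, mem_image, mem_filter_univ]; grind)
    simp only [slack] at this
    linarith
  · have := V.min'_mem hV
    simp only [V, mem_insert, mem_image, mem_filter_univ] at this
    rcases this with h | h | ⟨S, ⟨hx, hy⟩, hS⟩
    · exact Or.inl h
    · exact Or.inr (Or.inl h)
    · refine Or.inr (Or.inr ⟨S, hx, hy, ?_⟩)
      rw [← hS]
      ring

lemma exists_plan_of_tight [Fintype α] {n : ℕ}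
    (ih : ∀ (q₀' : α → 𝕜) (q₁' : β → 𝕜), HallCondition E q₀' q₁' → 0 ≤ q₀' → 0 ≤ q₁' →
      (support q₀').ncard + (support q₁').ncard < n → ∃ p, IsTransportPlan E p q₀' q₁')
    (h : HallCondition E q₀ q₁) (hq₀ : 0 ≤ q₀) (hq₁ : 0 ≤ q₁)
    (hn : (support q₀).ncard + (support q₁).ncard ≤ n) {T : Finset α}
    (hT : ∑ x ∈ T, q₀ x = ∑ y ∈ relImage E T, q₁ y)
    (hin : ∃ x ∈ T, q₀ x ≠ 0) (hout : ∃ x ∉ T, q₀ x ≠ 0) :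
    ∃ p, IsTransportPlan E p q₀ q₁ := by
  classical
  obtain ⟨p₁, hp₁⟩ := ih ((T : Set α).indicator q₀) ((relImage E T : Set β).indicator q₁)
    (h.indicator hq₁ T) (fun x ↦ Set.indicator_nonneg (fun x _ ↦ hq₀ x) x)
    (fun y ↦ Set.indicator_nonneg (fun y _ ↦ hq₁ y) y) <| by
      have := ncard_support_indicator_lt (s := (T : Set α)) hout
      have := ncard_support_indicator_le (relImage E T : Set β) q₁
      omega
  obtain ⟨p₂, hp₂⟩ := ih ((↑Tᶜ : Set α).indicator q₀) ((↑(relImage E T)ᶜ : Set β).indicator q₁)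
    (h.indicator_compl hT) (fun x ↦ Set.indicator_nonneg (fun x _ ↦ hq₀ x) x)
    (fun y ↦ Set.indicator_nonneg (fun y _ ↦ hq₁ y) y) <| by
      have := ncard_support_indicator_lt (s := (↑Tᶜ : Set α)) (by simpa using hin)
      have := ncard_support_indicator_le (↑(relImage E T)ᶜ : Set β) q₁
      omega
  have hp := hp₁.add hp₂
  rw [coe_compl, coe_compl, Set.indicator_self_add_compl, Set.indicator_self_add_compl] at hp
  exact ⟨_, hp⟩

end HallCondition

theorem HallCondition.exists_isTransportPlan [Fintype α] (h : HallCondition E q₀ q₁) (hq₀ : 0 ≤ q₀)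
    (hq₁ : 0 ≤ q₁) : ∃ p, IsTransportPlan E p q₀ q₁ := by
  induction hn : (support q₀).ncard + (support q₁).ncard using Nat.strong_induction_on
    generalizing q₀ q₁ with
  | _ n ih =>
  classical
  by_cases hq : q₀ = 0
  · exact ⟨0, hq ▸ IsTransportPlan.zero hq₁⟩
  obtain ⟨x₀, hx₀⟩ := Function.ne_iff.1 hq
  obtain ⟨y₀, hxy, hy₀⟩ := h.exists_rel_pos ((hq₀ x₀).lt_of_ne' hx₀)
  obtain ⟨ε, hε, hεx, hεy, hslack, hcases⟩ := h.exists_transfer_amount (hq₀ x₀) (hq₁ y₀)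
  set q₀' := q₀ - Pi.single x₀ ε
  set q₁' := q₁ - Pi.single y₀ ε
  have h' : HallCondition E q₀' q₁' := h.sub_single hxy hslack
  have hq₀' : 0 ≤ q₀' := sub_single_nonneg hq₀ hεx
  have hq₁' : 0 ≤ q₁' := sub_single_nonneg hq₁ hεy
  suffices ∃ p, IsTransportPlan E p q₀' q₁' by
    obtain ⟨p, hp⟩ := this
    exact ⟨_, hp.of_sub_single hxy hε⟩
  have hle₀ : (support q₀').ncard ≤ (support q₀).ncard := ncard_support_sub_single_le hx₀ ε
  have hle₁ : (support q₁').ncard ≤ (support q₁).ncard := ncard_support_sub_single_le hy₀.ne' ε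
  rcases (show (support q₀').ncard + (support q₁').ncard ≤ n by omega).lt_or_eq with hlt | heq
  · exact ih _ hlt h' hq₀' hq₁' rfl
  -- No support shrank, so `ε` is the slack of a set avoiding `x₀`, which is now tight.
  have hεx' : ε ≠ q₀ x₀ := by
    intro hεx'
    have : (support q₀').ncard < (support q₀).ncard := by
      simpa only [q₀', hεx'] using ncard_support_sub_single_self_lt hx₀
    omega
  have hεy' : ε ≠ q₁ y₀ := by
    intro hεy'
    have : (support q₁').ncard < (support q₁).ncard := by
      simpa only [q₁', hεy'] using ncard_support_sub_single_self_lt hy₀.ne'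
    omega
  obtain ⟨S, hxS, hyS, hS⟩ := hcases.resolve_left hεx' |>.resolve_left hεy'
  have hS' : ∑ x ∈ S, q₀' x = ∑ y ∈ relImage E S, q₁' y := by
    simp only [q₀', q₁', Pi.sub_apply, sum_sub_distrib, sum_pi_single', if_neg hxS, if_pos hyS]
    linarith
  obtain ⟨x, hx, hqx⟩ := exists_mem_ne_zero_of_add_eq hq₁ hyS hS (hεy.lt_of_ne hεy')
  have hin : q₀' x ≠ 0 := by simpa [q₀', show x ≠ x₀ by rintro rfl; exact hxS hx] using hqx
  have hout : q₀' x₀ ≠ 0 := by simpa [q₀', sub_eq_zero] using hεx'.symm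
  exact h'.exists_plan_of_tight (fun _ _ hH h₀ h₁ hlt ↦ ih _ hlt hH h₀ h₁ rfl) hq₀' hq₁' heq.le
    hS' ⟨x, hx, hin⟩ ⟨x₀, hxS, hout⟩

theorem exists_isTransportPlan_iff [Fintype α] (hq₀ : 0 ≤ q₀) (hq₁ : 0 ≤ q₁) :
    (∃ p, IsTransportPlan E p q₀ q₁) ↔ HallCondition E q₀ q₁ :=
  ⟨fun ⟨_, hp⟩ ↦ hp.hallCondition, fun h ↦ h.exists_isTransportPlan hq₀ hq₁⟩

end Sufficiency

end Transport

theorem generalized_FOSD_general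
    {X : Type*} [Fintype X]
    (q₀ q₁ : X → NNReal) (h0 : ∑ x : X, q₀ x = 1) (h1 : ∑ x : X, q₁ x = 1)
    (R : X → X → Prop) [DecidableRel R] :
    (∃ p : X × X → NNReal,
      (∀ x x' : X, R x x' → p (x, x') = 0) ∧
      (∀ x : X, ∑ x' : X, p (x, x') = q₀ x) ∧
      (∀ x' : X, ∑ x : X, p (x, x') = q₁ x'))
    ↔
    (∀ S : Finset X, ∑ x ∈ S, q₀ x ≤
        ∑ x' ∈ Finset.univ.filter (fun x' => ∃ s ∈ S, ¬ R s x'), q₁ x') := by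
  have hq : ∑ x, (q₀ x : ℝ) = ∑ x, (q₁ x : ℝ) := by exact_mod_cast h0.trans h1.symm
  have hHall : (∀ S : Finset X, ∑ x ∈ S, q₀ x ≤
      ∑ x' ∈ Finset.univ.filter (fun x' => ∃ s ∈ S, ¬ R s x'), q₁ x') ↔
      HallCondition (fun x x' ↦ ¬ R x x') (fun x ↦ (q₀ x : ℝ)) (fun x ↦ (q₁ x : ℝ)) := by
    refine forall_congr' fun S ↦ ?_
    rw [← NNReal.coe_le_coe, NNReal.coe_sum, NNReal.coe_sum]
    rfl
  rw [hHall, ← exists_isTransportPlan_iff (fun x ↦ (q₀ x).2) (fun x ↦ (q₁ x).2)]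
  constructor
  · rintro ⟨p, hR, hrow, hcol⟩
    refine ⟨fun x y ↦ p (x, y), fun x y ↦ (p (x, y)).2, fun x y h ↦ ?_, fun x ↦ ?_, fun y ↦ ?_⟩
    · simp [hR x y (not_not.1 h)]
    · simp [← hrow]
    · simp [← hcol]
  · rintro ⟨p, hp⟩
    refine ⟨fun z ↦ (p z.1 z.2).toNNReal, fun x y h ↦ ?_, fun x ↦ ?_, fun y ↦ ?_⟩
    · simp [hp.eq_zero_of_not_rel x y (not_not.2 h)]
    · ext
      simp [Real.coe_toNNReal _ (hp.nonneg x _), hp.sum_row]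
    · ext
      simp [Real.coe_toNNReal _ (hp.nonneg _ y), hp.sum_col hq]

/-- **generalized FOSD characterization, Theorem 2 part 1.**
A distribution over instrument-response types with marginals `q₀, q₁` that vanishes on the
ruled-out set `R` exists if and only if, for every subset `S` of treatment values, the
`q₀`-mass of `S` is at most the `q₁`-mass of the complement of the common lower contour
of `S` under the relation induced by `R`. -/
theorem generalized_FOSD
    {X : Type*} [Fintype X] [Nonempty X] [DecidableEq X]
    (q₀ q₁ : X → NNReal) (h0 : ∑ x : X, q₀ x = 1) (h1 : ∑ x : X, q₁ x = 1)
    (R : X → X → Prop) [DecidableRel R] :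
    (∃ p : X × X → NNReal,
      (∀ x x' : X, R x x' → p (x, x') = 0) ∧
      (∀ x : X, ∑ x' : X, p (x, x') = q₀ x) ∧
      (∀ x' : X, ∑ x : X, p (x, x') = q₁ x'))
    ↔
    (∀ S : Finset X, ∑ x ∈ S, q₀ x ≤
        ∑ x' ∈ Finset.univ.filter (fun x' => ∃ s ∈ S, ¬ R s x'), q₁ x') :=
  generalized_FOSD_general q₀ q₁ h0 h1 R
end

section
/- Suppose in addition that X carries a linear order. Then there exists a probability measure g on T consistent with the data whose instrument-response marginal satisfies p_g tᶻ = 0 whenever tᶻ 1 < tᶻ 0 (monotonicity: the treatment taken at the high instrument value is weakly larger), if and only if for every x ∈ X: Σ over x' ≥ x of ∫_Y φ 0 x' dμ ≤ Ψ x + Σ over x' > x of ∫_Y φ 1 x' dμ. -/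
/-!
Necessity: up to the null set of defiers (`tᶻ 1 < tᶻ 0`), a unit with `x ≤ tᶻ 0` either has
`x < tᶻ 1` or has `tᶻ = (x, x)`. The outcome law at `x` of the latter units lies below both
`φ 0 x · μ` and `φ 1 x · μ`, so their mass is at most `Ψ x`.

Sufficiency: let the units of type `(x, x)` have outcome density `min (φ 0 x) (φ 1 x)`, the same
outcome at every treatment. This leaves the complier masses `a x = ∫ φ 0 x - Ψ x` and
`b x = ∫ φ 1 x - Ψ x`, and the inequality says exactly that every upper tail `x' ≥ x` of `a` is
at most the strict upper tail `x' > x` of `b`. Hence the quantile coupling of `a` and `b` lives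
on pairs `x < x'`. Units of type `(x, x')` then get independent outcomes drawn from the
normalized complier densities.
-/

open MeasureTheory Finset
open scoped ENNReal NNReal

namespace BinaryMonotoneInstrument

section Necessity

variable {Y : Type*} [MeasurableSpace Y] {μ : Measure Y}

theorem measure_univ_le_lintegral_min {ν : Measure Y} {f g : Y → ℝ≥0∞} (hf : Measurable f)
    (hg : Measurable g) (hνf : ν ≤ μ.withDensity f) (hνg : ν ≤ μ.withDensity g) :
    ν Set.univ ≤ ∫⁻ y, min (f y) (g y) ∂μ := by
  have hS : MeasurableSet {y | f y ≤ g y} := measurableSet_le hf hg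
  calc ν Set.univ = ν {y | f y ≤ g y} + ν {y | f y ≤ g y}ᶜ := (measure_add_measure_compl hS).symm
    _ ≤ ∫⁻ y in {y | f y ≤ g y}, f y ∂μ + ∫⁻ y in {y | f y ≤ g y}ᶜ, g y ∂μ := by
      rw [← withDensity_apply _ hS, ← withDensity_apply _ hS.compl]
      exact add_le_add (hνf _) (hνg _)
    _ = ∫⁻ y in {y | f y ≤ g y}, min (f y) (g y) ∂μ
        + ∫⁻ y in {y | f y ≤ g y}ᶜ, min (f y) (g y) ∂μ := by
      congr 1
      · exact setLIntegral_congr_fun hS fun y hy => (min_eq_left hy).symm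
      · exact setLIntegral_congr_fun hS.compl fun y hy =>
          (min_eq_right (not_le.mp (Set.notMem_ofPred_iff.mp hy)).le).symm
    _ = ∫⁻ y, min (f y) (g y) ∂μ := lintegral_add_compl _ hS

variable {K X : Type*} [MeasurableSpace X]

def IsConsistent (μ : Measure Y) (φ : K → X → Y → ℝ≥0) (g : Measure ((K → X) × (X → Y))) :
    Prop :=
  ∀ (k : K) (x : X) (B : Set Y), MeasurableSet B →
    g {t | t.1 k = x ∧ t.2 x ∈ B} = ∫⁻ y in B, (φ k x y : ℝ≥0∞) ∂μ

variable {φ : K → X → Y → ℝ≥0} {g : Measure ((K → X) × (X → Y))}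

theorem IsConsistent.measure_setOf_fst_apply [Fintype X] [MeasurableSingletonClass X]
    (hg : IsConsistent μ φ g) (k : K) (p : X → Prop) [DecidablePred p] :
    g {t | p (t.1 k)} = ∑ x ∈ univ.filter p, ∫⁻ y, (φ k x y : ℝ≥0∞) ∂μ := by
  have hmeas : Measurable fun t : (K → X) × (X → Y) => t.1 k := by fun_prop
  have hfib (x : X) : g ((fun t => t.1 k) ⁻¹' {x}) = ∫⁻ y, (φ k x y : ℝ≥0∞) ∂μ := by
    have h := hg k x Set.univ MeasurableSet.univ
    simp only [Set.mem_univ, and_true, Measure.restrict_univ] at h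
    exact h
  rw [← sum_congr rfl fun x _ => hfib x,
    sum_measure_preimage_singleton _ fun x _ => hmeas (measurableSet_singleton x)]
  congr 1
  ext
  simp

theorem IsConsistent.isProbabilityMeasure [Fintype X] [MeasurableSingletonClass X]
    (hg : IsConsistent μ φ g) {k : K} (hk : ∑ x, ∫⁻ y, (φ k x y : ℝ≥0∞) ∂μ = 1) :
    IsProbabilityMeasure g :=
  ⟨by simpa [hk] using hg.measure_setOf_fst_apply k fun _ => True⟩

theorem IsConsistent.measure_stayers_le (hg : IsConsistent μ φ g) {k k' : K} {x : X}
    (hk : Measurable (φ k x)) (hk' : Measurable (φ k' x)) :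
    g {t | t.1 k = x ∧ t.1 k' = x} ≤ ∫⁻ y, ((min (φ k x y) (φ k' x y) : ℝ≥0) : ℝ≥0∞) ∂μ := by
  have hmeas : Measurable fun t : (K → X) × (X → Y) => t.2 x := by fun_prop
  set ν := (g.restrict {t | t.1 k = x ∧ t.1 k' = x}).map fun t => t.2 x
  have hν {j : K} (hj : ∀ t : (K → X) × (X → Y), t.1 k = x ∧ t.1 k' = x → t.1 j = x) :
      ν ≤ μ.withDensity fun y => φ j x y := by
    refine Measure.le_iff.mpr fun B hB => ?_
    rw [Measure.map_apply hmeas hB, Measure.restrict_apply (hmeas hB), withDensity_apply _ hB,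
      ← hg j x B hB]
    exact measure_mono fun t ht => ⟨hj t ht.2, ht.1⟩
  simpa [ν, Measure.map_apply hmeas MeasurableSet.univ] using
    measure_univ_le_lintegral_min hk.coe_nnreal_ennreal hk'.coe_nnreal_ennreal
      (hν fun _ h => h.1) (hν fun _ h => h.2)

theorem IsConsistent.sum_filter_le [Fintype X] [LinearOrder X] [MeasurableSingletonClass X]
    {φ : Fin 2 → X → Y → ℝ≥0} {g : Measure ((Fin 2 → X) × (X → Y))} (hg : IsConsistent μ φ g)
    (hφ : ∀ k x, Measurable (φ k x)) (hmono : ∀ tz : Fin 2 → X, tz 1 < tz 0 → g {t | t.1 = tz} = 0)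
    (x : X) :
    ∑ x' ∈ univ.filter (x ≤ ·), ∫⁻ y, (φ 0 x' y : ℝ≥0∞) ∂μ ≤
      ∫⁻ y, ((min (φ 0 x y) (φ 1 x y) : ℝ≥0) : ℝ≥0∞) ∂μ +
        ∑ x' ∈ univ.filter (x < ·), ∫⁻ y, (φ 1 x' y : ℝ≥0∞) ∂μ := by
  have hnull : g {t | t.1 1 < t.1 0} = 0 :=
    (measure_preimage_eq_zero_iff_of_countable (f := Prod.fst) (Set.to_countable _)).mpr hmono
  calc ∑ x' ∈ univ.filter (x ≤ ·), ∫⁻ y, (φ 0 x' y : ℝ≥0∞) ∂μ = g {t | x ≤ t.1 0} :=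
        (hg.measure_setOf_fst_apply 0 _).symm
    _ ≤ g ({t | t.1 0 = x ∧ t.1 1 = x} ∪ {t | x < t.1 1} ∪ {t | t.1 1 < t.1 0}) :=
        measure_mono fun t (ht : x ≤ t.1 0) => by
          simp only [Set.mem_union, Set.mem_ofPred_eq]
          by_contra! ⟨⟨hne, h₁⟩, h₀⟩
          exact hne (by order) (by order)
    _ ≤ g {t | t.1 0 = x ∧ t.1 1 = x} + g {t | x < t.1 1} + g {t | t.1 1 < t.1 0} :=
        (measure_union_le _ _).trans (add_le_add_left (measure_union_le _ _) _)
    _ ≤ _ := by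
      rw [hnull, add_zero, hg.measure_setOf_fst_apply 1]
      gcongr
      exact hg.measure_stayers_le (hφ 0 x) (hφ 1 x)

end Necessity

section Coupling

variable {X : Type*} [Fintype X] [LinearOrder X]

theorem sum_filter_le_eq_add_sum_filter_lt {M : Type*} [AddCommMonoid M] (a : X → M) (x : X) :
    ∑ x' ∈ univ.filter (x ≤ ·), a x' = a x + ∑ x' ∈ univ.filter (x < ·), a x' := by
  rw [← sum_insert (by simp)]
  congr 1
  ext x'
  simp [le_iff_eq_or_lt, eq_comm]

/-- For `a ≥ 0` these blocks tile `[0, ∑ a)`, the larger `x` the lower its block. -/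
def tailBlock (a : X → ℝ) (x : X) : Set ℝ :=
  Set.Ico (∑ x' ∈ univ.filter (x < ·), a x') (∑ x' ∈ univ.filter (x ≤ ·), a x')

theorem volume_tailBlock (a : X → ℝ) (x : X) : volume (tailBlock a x) = ENNReal.ofReal (a x) := by
  rw [tailBlock, Real.volume_Ico, sum_filter_le_eq_add_sum_filter_lt, add_sub_cancel_right]

theorem disjoint_tailBlock {a b : X → ℝ} {x x' : X}
    (h : ∑ w ∈ univ.filter (x ≤ ·), a w ≤ ∑ w ∈ univ.filter (x' < ·), b w) :
    Disjoint (tailBlock a x) (tailBlock b x') :=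
  Set.disjoint_left.mpr fun _ h₁ h₂ => (h₁.2.trans_le h).not_ge h₂.1

theorem sum_filter_lt_anti {a : X → ℝ} (ha : 0 ≤ a) {x x' : X} (h : x ≤ x') :
    ∑ w ∈ univ.filter (x' < ·), a w ≤ ∑ w ∈ univ.filter (x < ·), a w :=
  sum_le_sum_of_subset_of_nonneg (fun w => by simpa using h.trans_lt) fun w _ _ => ha w

theorem pairwise_disjoint_tailBlock {a : X → ℝ} (ha : 0 ≤ a) :
    Pairwise (Function.onFun Disjoint (tailBlock a)) := by
  have key : ∀ {x x'}, x < x' → Disjoint (tailBlock a x') (tailBlock a x) := fun h =>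
    disjoint_tailBlock (sum_le_sum_of_subset_of_nonneg (fun w => by simpa using h.trans_le)
      fun w _ _ => ha w)
  intro x x' hne
  rcases hne.lt_or_gt with h | h
  exacts [(key h).symm, key h]

theorem tailBlock_subset_Ico {a : X → ℝ} (ha : 0 ≤ a) (x : X) :
    tailBlock a x ⊆ Set.Ico 0 (∑ x', a x') :=
  Set.Ico_subset_Ico (sum_nonneg fun w _ => ha w)
    (sum_le_sum_of_subset_of_nonneg (subset_univ _) fun w _ _ => ha w)

theorem iUnion_tailBlock_ae_eq {a : X → ℝ} (ha : 0 ≤ a) :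
    (⋃ x, tailBlock a x) =ᵐ[volume] Set.Ico 0 (∑ x, a x) := by
  refine ae_eq_of_subset_of_measure_ge (Set.iUnion_subset (tailBlock_subset_Ico ha)) ?_
    (MeasurableSet.iUnion fun _ => measurableSet_Ico).nullMeasurableSet measure_Ico_lt_top.ne
  rw [measure_iUnion (pairwise_disjoint_tailBlock ha) fun _ => measurableSet_Ico, tsum_fintype,
    Real.volume_Ico, sub_zero, ENNReal.ofReal_sum_of_nonneg fun x _ => ha x]
  simp only [volume_tailBlock, le_refl]

theorem sum_volume_tailBlock_inter {a b : X → ℝ} (ha : 0 ≤ a) (hb : 0 ≤ b)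
    (hab : ∑ x, a x = ∑ x, b x) (x : X) :
    ∑ x', volume (tailBlock a x ∩ tailBlock b x') = ENNReal.ofReal (a x) := by
  have hdisj := measure_iUnion (μ := volume) (f := fun x' => tailBlock a x ∩ tailBlock b x')
    (fun x₁ x₂ h => ((pairwise_disjoint_tailBlock hb h).mono
      Set.inter_subset_right Set.inter_subset_right))
    fun _ => measurableSet_Ico.inter measurableSet_Ico
  rw [tsum_fintype, ← Set.inter_iUnion,
    measure_congr ((ae_eq_refl _).inter (iUnion_tailBlock_ae_eq hb)), ← hab,
    Set.inter_eq_left.mpr (tailBlock_subset_Ico ha x), volume_tailBlock] at hdisj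
  exact hdisj.symm

/-- Quantile coupling. Tail dominance puts the `a`-block of `x` below the `b`-block of every
`x' ≤ x`. -/
theorem exists_coupling_lt_of_sum_le_sum {a b : X → ℝ≥0∞} (ha : ∀ x, a x ≠ ∞)
    (hb : ∀ x, b x ≠ ∞) (hab : ∑ x, a x = ∑ x, b x)
    (hdom : ∀ x, ∑ x' ∈ univ.filter (x ≤ ·), a x' ≤ ∑ x' ∈ univ.filter (x < ·), b x') :
    ∃ q : X → X → ℝ≥0∞, (∀ x, ∑ x', q x x' = a x) ∧ (∀ x', ∑ x, q x x' = b x') ∧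
      ∀ x x', x' ≤ x → q x x' = 0 := by
  have hsum {c : X → ℝ≥0∞} (hc : ∀ x, c x ≠ ∞) (s : Finset X) :
      ∑ x ∈ s, (c x).toReal = (∑ x ∈ s, c x).toReal :=
    (ENNReal.toReal_sum fun x _ => hc x).symm
  have hnn {c : X → ℝ≥0∞} : 0 ≤ fun x => (c x).toReal := fun x => ENNReal.toReal_nonneg
  have htot : ∑ x, (a x).toReal = ∑ x, (b x).toReal := by rw [hsum ha, hsum hb, hab]
  refine ⟨fun x x' => volume (tailBlock (fun x => (a x).toReal) x ∩
    tailBlock (fun x => (b x).toReal) x'), fun x => ?_, fun x' => ?_, fun x x' h => ?_⟩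
  · rw [sum_volume_tailBlock_inter hnn hnn htot, ENNReal.ofReal_toReal (ha x)]
  · rw [← ENNReal.ofReal_toReal (hb x'), ← sum_volume_tailBlock_inter hnn hnn htot.symm]
    exact sum_congr rfl fun _ _ => by rw [Set.inter_comm]
  · have hle : ∑ w ∈ univ.filter (x ≤ ·), (a w).toReal ≤
        ∑ w ∈ univ.filter (x' < ·), (b w).toReal :=
      calc ∑ w ∈ univ.filter (x ≤ ·), (a w).toReal
          = (∑ w ∈ univ.filter (x ≤ ·), a w).toReal := hsum ha _
        _ ≤ (∑ w ∈ univ.filter (x < ·), b w).toReal :=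
          ENNReal.toReal_mono (ENNReal.sum_ne_top.mpr fun w _ => hb w) (hdom x)
        _ = ∑ w ∈ univ.filter (x < ·), (b w).toReal := (hsum hb _).symm
        _ ≤ _ := sum_filter_lt_anti hnn h
    simp [Set.disjoint_iff_inter_eq_empty.mp (disjoint_tailBlock hle)]

end Coupling

section Gluing

variable {X Y : Type*} [MeasurableSpace Y]

theorem measure_univ_smul_inv_smul (ν : Measure Y) [IsFiniteMeasure ν] :
    ν Set.univ • (ν Set.univ)⁻¹ • ν = ν := by
  by_cases h : ν = 0
  · simp [h]
  · rw [smul_smul, ENNReal.mul_inv_cancel (Measure.measure_univ_eq_zero.not.mpr h)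
      (measure_ne_top _ _), one_smul]

theorem mul_inv_smul_apply_univ {ν : Measure Y} [IsFiniteMeasure ν] {r : ℝ≥0∞}
    (hr : r ≤ ν Set.univ) : r * ((ν Set.univ)⁻¹ • ν) Set.univ = r := by
  by_cases h : ν Set.univ = 0
  · simp [nonpos_iff_eq_zero.mp (h ▸ hr)]
  · rw [Measure.smul_apply, smul_eq_mul, ENNReal.inv_mul_cancel h (measure_ne_top _ _), mul_one]

theorem map_eval_map_const (σ : Measure Y) (x : X) :
    (σ.map fun y (_ : X) => y).map (Function.eval x) = σ := by
  rw [Measure.map_map (measurable_pi_apply x) (by fun_prop)]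
  exact Measure.map_id

variable [DecidableEq X]

def glue (z : X) (p : Y × Y) : X → Y := fun w => if w = z then p.1 else p.2

theorem measurable_glue (z : X) : Measurable (glue (Y := Y) z) :=
  measurable_pi_lambda _ fun w => by unfold glue; split_ifs <;> fun_prop

theorem map_eval_map_glue (μ₀ μ₁ : Measure Y) [SFinite μ₁] (z x : X) :
    ((μ₀.prod μ₁).map (glue z)).map (Function.eval x) =
      if x = z then μ₁ Set.univ • μ₀ else μ₀ Set.univ • μ₁ := by
  rw [Measure.map_map (measurable_pi_apply x) (measurable_glue z)]
  split_ifs with h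
  · have : Function.eval x ∘ glue (Y := Y) z = Prod.fst := by funext p; simp [glue, h]
    rw [this, Measure.map_fst_prod]
  · have : Function.eval x ∘ glue (Y := Y) z = Prod.snd := by funext p; simp [glue, h]
    rw [this, Measure.map_snd_prod]

/-- Units responding `(z, z)` get one outcome `y ∼ σ z` shared by all treatments; units responding
`(z, z')` get independent outcomes from the normalized `ν₀ z` at `z` and `ν₁ z'` elsewhere. -/
noncomputable def outcomeLaw (σ ν₀ ν₁ : X → Measure Y) (q : X → X → ℝ≥0∞) (z z' : X) :
    Measure (X → Y) :=
  (if z = z' then (σ z).map (fun y _ => y) else 0) +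
    q z z' • (((ν₀ z Set.univ)⁻¹ • ν₀ z).prod ((ν₁ z' Set.univ)⁻¹ • ν₁ z')).map (glue z)

variable {σ ν₀ ν₁ : X → Measure Y} {q : X → X → ℝ≥0∞} [∀ z, IsFiniteMeasure (ν₁ z)]

theorem map_eval_outcomeLaw (x z z' : X) :
    (outcomeLaw σ ν₀ ν₁ q z z').map (Function.eval x) =
      (if z = z' then σ z else 0) + q z z' •
        if x = z then ((ν₁ z' Set.univ)⁻¹ • ν₁ z') Set.univ • (ν₀ z Set.univ)⁻¹ • ν₀ z
        else ((ν₀ z Set.univ)⁻¹ • ν₀ z) Set.univ • (ν₁ z' Set.univ)⁻¹ • ν₁ z' := by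
  rw [outcomeLaw, Measure.map_add _ _ (measurable_pi_apply x), Measure.map_smul,
    map_eval_map_glue]
  split_ifs <;> simp [map_eval_map_const]

variable [Fintype X] [∀ z, IsFiniteMeasure (ν₀ z)]

theorem sum_map_eval_outcomeLaw_left (hrow : ∀ z, ∑ z', q z z' = ν₀ z Set.univ)
    (hcol : ∀ z', ∑ z, q z z' = ν₁ z' Set.univ) (x : X) :
    ∑ z', (outcomeLaw σ ν₀ ν₁ q x z').map (Function.eval x) = σ x + ν₀ x := by
  have hq (z' : X) : q x z' • ((ν₁ z' Set.univ)⁻¹ • ν₁ z') Set.univ • (ν₀ x Set.univ)⁻¹ • ν₀ x =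
      q x z' • (ν₀ x Set.univ)⁻¹ • ν₀ x := by
    rw [smul_smul, mul_inv_smul_apply_univ
      (hcol z' ▸ single_le_sum (f := (q · z')) (fun _ _ => zero_le) (mem_univ x))]
  simp only [map_eval_outcomeLaw, if_true, sum_add_distrib, sum_ite_eq, mem_univ, hq,
    ← sum_smul, hrow, measure_univ_smul_inv_smul]

theorem sum_map_eval_outcomeLaw_right (hrow : ∀ z, ∑ z', q z z' = ν₀ z Set.univ)
    (hcol : ∀ z', ∑ z, q z z' = ν₁ z' Set.univ) {x : X} (hx : q x x = 0) :
    ∑ z, (outcomeLaw σ ν₀ ν₁ q z x).map (Function.eval x) = σ x + ν₁ x := by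
  have hq (z : X) : q z x •
      (if x = z then ((ν₁ x Set.univ)⁻¹ • ν₁ x) Set.univ • (ν₀ z Set.univ)⁻¹ • ν₀ z
        else ((ν₀ z Set.univ)⁻¹ • ν₀ z) Set.univ • (ν₁ x Set.univ)⁻¹ • ν₁ x) =
      q z x • (ν₁ x Set.univ)⁻¹ • ν₁ x := by
    split_ifs with h
    · simp [← h, hx]
    · rw [smul_smul, mul_inv_smul_apply_univ
        (hrow z ▸ single_le_sum (f := q z) (fun _ _ => zero_le) (mem_univ x))]
  simp only [map_eval_outcomeLaw, hq, sum_add_distrib, sum_ite_eq', mem_univ, if_true,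
    ← sum_smul, hcol, measure_univ_smul_inv_smul]

end Gluing

section Construction

variable {X Y : Type*} [Fintype X] [MeasurableSpace X] [MeasurableSingletonClass X]
  [MeasurableSpace Y]

/-- `ρ z z'` is the joint law of the potential outcomes of the units whose treatments at the two
instrument values are `z` and `z'`. -/
noncomputable def responseMeasure (ρ : X → X → Measure (X → Y)) :
    Measure ((Fin 2 → X) × (X → Y)) :=
  ∑ z, ∑ z', (ρ z z').map (Prod.mk ![z, z'])

variable (ρ : X → X → Measure (X → Y))

theorem responseMeasure_apply (S : Set ((Fin 2 → X) × (X → Y))) :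
    responseMeasure ρ S = ∑ z, ∑ z', ρ z z' (Prod.mk ![z, z'] ⁻¹' S) := by
  simp only [responseMeasure, Measure.finsetSum_apply,
    (measurableEmbedding_prodMk_left _).map_apply]

theorem responseMeasure_fst_zero (x : X) (B : Set Y) :
    responseMeasure ρ {t | t.1 0 = x ∧ t.2 x ∈ B} = ∑ z', ρ x z' (Function.eval x ⁻¹' B) := by
  rw [responseMeasure_apply, sum_eq_single x]
  · simp [Set.preimage]
  · intro z _ hz
    simp [Set.preimage, hz]
  · simp

theorem responseMeasure_fst_one (x : X) (B : Set Y) :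
    responseMeasure ρ {t | t.1 1 = x ∧ t.2 x ∈ B} = ∑ z, ρ z x (Function.eval x ⁻¹' B) := by
  rw [responseMeasure_apply]
  refine sum_congr rfl fun z _ => ?_
  rw [sum_eq_single x]
  · simp [Set.preimage]
  · intro z _ hz
    simp [Set.preimage, hz]
  · simp

theorem responseMeasure_fst_eq (tz : Fin 2 → X) :
    responseMeasure ρ {t | t.1 = tz} = ρ (tz 0) (tz 1) Set.univ := by
  rw [responseMeasure_apply, sum_eq_single (tz 0), sum_eq_single (tz 1)]
  · congr
    ext
    simp [funext_iff, Fin.forall_fin_two]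
  · intro z _ hz
    simp [Set.preimage, funext_iff, Fin.forall_fin_two, hz]
  · simp
  · intro z _ hz
    simp [Set.preimage, funext_iff, Fin.forall_fin_two, hz]
  · simp

theorem isConsistent_responseMeasure {μ : Measure Y} {φ : Fin 2 → X → Y → ℝ≥0}
    (h₀ : ∀ x, ∑ z', (ρ x z').map (Function.eval x) = μ.withDensity fun y => φ 0 x y)
    (h₁ : ∀ x, ∑ z, (ρ z x).map (Function.eval x) = μ.withDensity fun y => φ 1 x y) :
    IsConsistent μ φ (responseMeasure ρ) := by
  intro k x B hB
  have hmap {z z'} : (ρ z z').map (Function.eval x) B = ρ z z' (Function.eval x ⁻¹' B) :=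
    Measure.map_apply (measurable_pi_apply x) hB
  fin_cases k
  · simp only [Fin.zero_eta, responseMeasure_fst_zero, ← hmap, ← Measure.finsetSum_apply, h₀,
      withDensity_apply _ hB]
  · simp only [Fin.mk_one, responseMeasure_fst_one, ← hmap, ← Measure.finsetSum_apply, h₁,
      withDensity_apply _ hB]

end Construction

section Sufficiency

variable {X Y : Type*} [MeasurableSpace Y] {μ : Measure Y}

theorem withDensity_add_withDensity_sub {f h : Y → ℝ≥0∞} (hh : Measurable h) (hle : h ≤ f) :
    μ.withDensity h + μ.withDensity (f - h) = μ.withDensity f := by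
  rw [← withDensity_add_left hh, add_tsub_cancel_of_le hle]

theorem sum_filter_le_le_sum_filter_lt_of_add [Fintype X] [LinearOrder X] {Ψ c₀ c₁ : X → ℝ≥0∞}
    (hΨ : ∀ x, Ψ x ≠ ∞) {x : X}
    (h : ∑ x' ∈ univ.filter (x ≤ ·), (Ψ x' + c₀ x') ≤
      Ψ x + ∑ x' ∈ univ.filter (x < ·), (Ψ x' + c₁ x')) :
    ∑ x' ∈ univ.filter (x ≤ ·), c₀ x' ≤ ∑ x' ∈ univ.filter (x < ·), c₁ x' := by
  rw [sum_add_distrib, sum_add_distrib, sum_filter_le_eq_add_sum_filter_lt, add_assoc,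
    ENNReal.add_le_add_iff_left (hΨ x),
    ENNReal.add_le_add_iff_left (ENNReal.sum_ne_top.mpr fun x _ => hΨ x)] at h
  exact h

theorem exists_isConsistent_monotone [Fintype X] [DecidableEq X] [LinearOrder X]
    [MeasurableSpace X] [MeasurableSingletonClass X]
    {φ : Fin 2 → X → Y → ℝ≥0} (hφ : ∀ k x, Measurable (φ k x))
    (hmass : ∀ k : Fin 2, ∑ x : X, ∫⁻ y, (φ k x y : ℝ≥0∞) ∂μ = 1)
    (hineq : ∀ x : X,
      ∑ x' ∈ univ.filter (x ≤ ·), ∫⁻ y, (φ 0 x' y : ℝ≥0∞) ∂μ ≤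
        ∫⁻ y, ((min (φ 0 x y) (φ 1 x y) : ℝ≥0) : ℝ≥0∞) ∂μ +
          ∑ x' ∈ univ.filter (x < ·), ∫⁻ y, (φ 1 x' y : ℝ≥0∞) ∂μ) :
    ∃ g, IsConsistent μ φ g ∧ ∀ tz : Fin 2 → X, tz 1 < tz 0 → g {t | t.1 = tz} = 0 := by
  set ψ : X → Y → ℝ≥0∞ := fun z y => ((min (φ 0 z y) (φ 1 z y) : ℝ≥0) : ℝ≥0∞)
  set ν : Fin 2 → X → Measure Y := fun k z => μ.withDensity ((fun y => (φ k z y : ℝ≥0∞)) - ψ z)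
  have hsplit (k : Fin 2) (z : X) :
      μ.withDensity (ψ z) + ν k z = μ.withDensity fun y => φ k z y :=
    withDensity_add_withDensity_sub ((hφ 0 z).min (hφ 1 z)).coe_nnreal_ennreal fun y =>
      ENNReal.coe_le_coe.mpr (by fin_cases k; exacts [min_le_left _ _, min_le_right _ _])
  have hmass' (k : Fin 2) (z : X) :
      ∫⁻ y, ψ z y ∂μ + ν k z Set.univ = ∫⁻ y, (φ k z y : ℝ≥0∞) ∂μ := by
    simpa using congrArg (· Set.univ) (hsplit k z)
  have hfin (k : Fin 2) (z : X) : ∫⁻ y, (φ k z y : ℝ≥0∞) ∂μ ≠ ∞ :=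
    ne_top_of_le_ne_top ENNReal.one_ne_top
      (hmass k ▸ single_le_sum (f := fun z => ∫⁻ y, (φ k z y : ℝ≥0∞) ∂μ) (fun _ _ => zero_le)
        (mem_univ z))
  have hΨ (z : X) : ∫⁻ y, ψ z y ∂μ ≠ ∞ :=
    ne_top_of_le_ne_top (hfin 0 z) (le_self_add.trans_eq (hmass' 0 z))
  have (k : Fin 2) (z : X) : IsFiniteMeasure (ν k z) :=
    ⟨(le_add_self.trans_eq (hmass' k z)).trans_lt (hfin k z).lt_top⟩
  have htot : ∑ z, ν 0 z Set.univ = ∑ z, ν 1 z Set.univ := by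
    rw [← ENNReal.add_right_inj (ENNReal.sum_ne_top.mpr fun z _ => hΨ z), ← sum_add_distrib,
      ← sum_add_distrib]
    simp only [hmass', hmass]
  obtain ⟨q, hrow, hcol, hq⟩ := exists_coupling_lt_of_sum_le_sum (fun _ => measure_ne_top _ _)
    (fun _ => measure_ne_top _ _) htot
    fun x => sum_filter_le_le_sum_filter_lt_of_add hΨ (by simpa only [hmass'] using hineq x)
  refine ⟨responseMeasure (outcomeLaw (fun z => μ.withDensity (ψ z)) (ν 0) (ν 1) q),
    isConsistent_responseMeasure _
      (fun x => by rw [sum_map_eval_outcomeLaw_left hrow hcol, hsplit])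
      (fun x => by rw [sum_map_eval_outcomeLaw_right hrow hcol (hq x x le_rfl), hsplit]),
    fun tz h => ?_⟩
  simp [responseMeasure_fst_eq, outcomeLaw, h.ne', hq _ _ h.le]

end Sufficiency

end BinaryMonotoneInstrument

open BinaryMonotoneInstrument

theorem sharp_binary_monotone_instrument_general
    {Y : Type*} [MeasurableSpace Y] (μ : Measure Y)
    {X : Type*} [Fintype X] [DecidableEq X] [LinearOrder X]
    [MeasurableSpace X] [MeasurableSingletonClass X]
    (φ : Fin 2 → X → Y → NNReal) (hφ : ∀ k x, Measurable (φ k x))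
    (hmass : ∀ k : Fin 2, ∑ x : X, ∫⁻ y, (φ k x y : ℝ≥0∞) ∂μ = 1) :
    (∃ g : Measure ((Fin 2 → X) × (X → Y)), IsProbabilityMeasure g ∧
      (∀ (k : Fin 2) (x : X) (B : Set Y), MeasurableSet B →
        g {t | t.1 k = x ∧ t.2 x ∈ B} = ∫⁻ y in B, (φ k x y : ℝ≥0∞) ∂μ) ∧
      (∀ tz : Fin 2 → X, tz 1 < tz 0 → g {t | t.1 = tz} = 0))
    ↔
    (∀ x : X,
      ∑ x' ∈ Finset.univ.filter (fun x' => x ≤ x'), ∫⁻ y, (φ 0 x' y : ℝ≥0∞) ∂μ ≤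
        (∫⁻ y, ((min (φ 0 x y) (φ 1 x y) : NNReal) : ℝ≥0∞) ∂μ) +
          ∑ x' ∈ Finset.univ.filter (fun x' => x < x'), ∫⁻ y, (φ 1 x' y : ℝ≥0∞) ∂μ) := by
  refine ⟨fun ⟨g, _, hg, hmono⟩ => IsConsistent.sum_filter_le hg hφ hmono, fun h => ?_⟩
  obtain ⟨g, hg, hmono⟩ := exists_isConsistent_monotone hφ hmass h
  exact ⟨g, hg.isProbabilityMeasure (hmass 0), hg, hmono⟩

/-- **Corollary 1: sharp observable implications of binary monotone
instruments.** With linearly ordered treatments, a probability measure on response types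
consistent with the data whose instrument-response marginal vanishes on non-monotone types
(`tz 1 < tz 0`) exists if and only if, for every treatment value `x`,
`P[X ≥ x | Z = z₀] ≤ Ψ x + P[X > x | Z = z₁]`. -/
theorem sharp_binary_monotone_instrument
    {Y : Type*} [MeasurableSpace Y] [Nonempty Y] (μ : Measure Y) [SigmaFinite μ]
    {X : Type*} [Fintype X] [Nonempty X] [DecidableEq X] [LinearOrder X]
    [MeasurableSpace X] [MeasurableSingletonClass X]
    (φ : Fin 2 → X → Y → NNReal) (hφ : ∀ k x, Measurable (φ k x))
    (hmass : ∀ k : Fin 2, ∑ x : X, ∫⁻ y, (φ k x y : ℝ≥0∞) ∂μ = 1) :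
    (∃ g : Measure ((Fin 2 → X) × (X → Y)), IsProbabilityMeasure g ∧
      (∀ (k : Fin 2) (x : X) (B : Set Y), MeasurableSet B →
        g {t | t.1 k = x ∧ t.2 x ∈ B} = ∫⁻ y in B, (φ k x y : ℝ≥0∞) ∂μ) ∧
      (∀ tz : Fin 2 → X, tz 1 < tz 0 → g {t | t.1 = tz} = 0))
    ↔
    (∀ x : X,
      ∑ x' ∈ Finset.univ.filter (fun x' => x ≤ x'), ∫⁻ y, (φ 0 x' y : ℝ≥0∞) ∂μ ≤
        (∫⁻ y, ((min (φ 0 x y) (φ 1 x y) : NNReal) : ℝ≥0∞) ∂μ) +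
          ∑ x' ∈ Finset.univ.filter (fun x' => x < x'), ∫⁻ y, (φ 1 x' y : ℝ≥0∞) ∂μ) :=
  sharp_binary_monotone_instrument_general μ φ hφ hmass
end

section
/- Let X be a nonempty finite type and ⊵ an irreflexive relation on X. If h is a ⊵-submonotone distribution over latent preference types, then the induced distribution over instrument-response types satisfies p_h(a,b) = 0 for every pair (a,b) with a ⊵ b. -/
open scoped NNReal

/-- A latent preference type on `X`: a pair of strict preferences (strict total orders),
the unit's preferences at the two values of a binary instrument. -/
def LatentPref (X : Type*) : Type _ :=
  {pr : (X → X → Prop) × (X → X → Prop) //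
    IsStrictTotalOrder X pr.1 ∧ IsStrictTotalOrder X pr.2}

/-- A pair of preferences `(r₀, r₁)` is `⊵`-submonotone (no preference reversals against
the relation `tr`): whenever `tr a b` and `a` is `r₀`-preferred to `b`, `a` remains
`r₁`-preferred to `b`. -/
def SubmonoPair {X : Type*} (tr : X → X → Prop)
    (pr : (X → X → Prop) × (X → X → Prop)) : Prop :=
  ∀ a b : X, tr a b → pr.1 a b → pr.2 a b

/-- `m` is the greatest element of the strict preference `r` (the rational choice). -/
def GreatestElem {X : Type*} (r : X → X → Prop) (m : X) : Prop :=
  ∀ x : X, x ≠ m → r m x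

/-- A distribution over latent preference types: nonnegative weights of total mass one
(the set of latent preference types over a finite `X` is finite). -/
def IsPrefDist {X : Type*} (h : LatentPref X → ℝ≥0) : Prop :=
  ∑ᶠ pr : LatentPref X, h pr = 1

/-- A `⊵`-submonotone distribution over latent preference types: a distribution that
vanishes on every pair of preferences that is not `⊵`-submonotone. -/
def SubmonoDist {X : Type*} (tr : X → X → Prop) (h : LatentPref X → ℝ≥0) : Prop :=
  IsPrefDist h ∧ ∀ pr : LatentPref X, ¬ SubmonoPair tr pr.1 → h pr = 0

/-- The distribution over instrument-response types induced by a distribution over latent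
preference types: `inducedIR h x x'` is the total weight of latent preference types whose
first preference has greatest element `x` and whose second has greatest element `x'`. -/
noncomputable def inducedIR {X : Type*} (h : LatentPref X → ℝ≥0) (x x' : X) : ℝ≥0 :=
  ∑ᶠ (pr : LatentPref X)
    (_ : GreatestElem pr.1.1 x ∧ GreatestElem pr.1.2 x'), h pr

/-- For an irreflexive relation `⊵`, any `⊵`-submonotone distribution over
latent preference types induces a distribution over instrument-response types that vanishes
on every pair `(a, b)` with `a ⊵ b`. -/
theorem submonotone_rules_out_switches
    {X : Type*} [Fintype X] [Nonempty X]
    (tr : X → X → Prop) (hirr : ∀ a : X, ¬ tr a a)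
    (h : LatentPref X → ℝ≥0) (hh : SubmonoDist tr h) :
    ∀ a b : X, tr a b → inducedIR h a b = 0 := by
  intro a b hab
  have hne : b ≠ a := fun e => hirr a (e ▸ hab)
  unfold inducedIR
  apply finsum_eq_zero_of_forall_eq_zero
  intro pr
  classical
  rw [finsum_eq_if]
  split_ifs with hc
  · obtain ⟨h0, h1⟩ := hc
    apply hh.2
    intro hsub
    obtain ⟨⟨r0, r1⟩, ⟨ht0, ht1⟩⟩ := pr
    have h01 : r0 a b := h0 b hne
    have h11 : r1 a b := hsub a b hab h01
    have h1b : r1 b a := h1 a (fun e => hirr a (e ▸ hab))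
    exact ht1.irrefl a (ht1.trans a b a h11 h1b)
  · rfl
end

section
/- Let X be a nonempty finite type and ⊵ an irreflexive relation on X. Let p : X × X → ℝ≥0 satisfy Σ_{(x,x')} p(x,x') = 1 and p(a,b) = 0 for every pair with a ⊵ b. Then there exists a ⊵-submonotone distribution h over latent preference types with p_h = p; that is, every admissible distribution over instrument-response types is rationalized by submonotone latent preferences. -/
/-!
Put the mass `p (x, x')` on the latent type whose first preference ranks `x` first and `x'`
second, and whose second preference swaps these two top alternatives and ranks the rest in the
same order. Its two preferences disagree only on the pair `{x, x'}`, so it is submonotone as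
soon as `¬ x ⊵ x'`, which holds whenever `p (x, x') ≠ 0`; and its two choices are `x` and `x'`,
so it induces `p`.
-/

open scoped NNReal

open Finset Function

theorem Finset.sum_filter_fiberwise {ι κ M : Type*} [Fintype ι] [Fintype κ] [DecidableEq κ]
    [AddCommMonoid M] (g : ι → κ) (P : κ → Prop) [DecidablePred P] (f : ι → M) :
    ∑ j with P j, ∑ i with g i = j, f i = ∑ i with P (g i), f i := by
  rw [sum_filter, sum_filter, ← sum_fiberwise univ g]
  refine sum_congr rfl fun j _ => ?_
  split_ifs with hj
  · exact sum_congr rfl fun i hi => by rw [(mem_filter.1 hi).2, if_pos hj]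
  · exact (sum_eq_zero fun i hi => by rw [(mem_filter.1 hi).2, if_neg hj]).symm

section

variable {X : Type*}

theorem GreatestElem.unique {r : X → X → Prop} [Std.Asymm r] {m m' : X}
    (hm : GreatestElem r m) (hm' : GreatestElem r m') : m = m' := by
  by_contra hne
  exact Std.Asymm.asymm _ _ (hm m' (Ne.symm hne)) (hm' m hne)

instance [Finite X] : Finite (LatentPref X) := Subtype.finite

noncomputable instance [Finite X] : Fintype (LatentPref X) := Fintype.ofFinite _

variable [Fintype X]

open Classical in
noncomputable def topTwoRank (x y a : X) : ℕ :=
  if a = x then 0 else if a = y then 1 else Fintype.equivFin X a + 2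

theorem topTwoRank_injective (x y : X) : Injective (topTwoRank x y) := by
  intro a b hab
  by_contra hne
  unfold topTwoRank at hab
  split_ifs at hab <;> subst_vars <;> first
    | exact hne rfl
    | omega
    | exact hne ((Fintype.equivFin X).injective (Fin.ext (by omega)))

noncomputable def topTwo (x y : X) : X → X → Prop := (· < ·) on topTwoRank x y

instance (x y : X) : IsStrictTotalOrder X (topTwo x y) :=
  (topTwoRank_injective x y).isStrictTotalOrder_onFun _

theorem greatestElem_topTwo (x y : X) : GreatestElem (topTwo x y) x := by
  intro a ha
  simp only [topTwo, onFun, topTwoRank, ↓reduceIte, ha]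
  split_ifs <;> omega

theorem greatestElem_topTwo_iff {x y m : X} : GreatestElem (topTwo x y) m ↔ m = x :=
  ⟨fun hm => hm.unique (greatestElem_topTwo x y), fun h => h ▸ greatestElem_topTwo x y⟩

theorem topTwo_swap {x y a b : X} (hab : topTwo x y a b) (hxy : ¬(a = x ∧ b = y)) :
    topTwo y x a b := by
  simp only [topTwo, onFun, topTwoRank] at hab ⊢
  split_ifs at hab ⊢ <;> subst_vars <;> simp_all

noncomputable def LatentPref.ofTops (x y : X) : LatentPref X :=
  ⟨(topTwo x y, topTwo y x), inferInstance, inferInstance⟩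

theorem submonoPair_ofTops {tr : X → X → Prop} {x y : X} (hxy : ¬ tr x y) :
    SubmonoPair tr (LatentPref.ofTops x y).1 := by
  intro a b hab h
  refine topTwo_swap h ?_
  rintro ⟨rfl, rfl⟩
  exact hxy hab

open Classical in
theorem inducedIR_eq_sum (h : LatentPref X → ℝ≥0) (x x' : X) :
    inducedIR h x x' = ∑ pr with GreatestElem pr.1.1 x ∧ GreatestElem pr.1.2 x', h pr := by
  rw [inducedIR, sum_filter, ← finsum_eq_sum_of_fintype]
  exact finsum_congr fun _ => finsum_eq_if

open Classical in
noncomputable def ofTopsDist (p : X × X → ℝ≥0) (pr : LatentPref X) : ℝ≥0 :=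
  ∑ q with LatentPref.ofTops q.1 q.2 = pr, p q

theorem sum_ofTopsDist (p : X × X → ℝ≥0) : ∑ pr, ofTopsDist p pr = ∑ q, p q := by
  classical
  exact sum_fiberwise univ _ p

theorem submonoDist_ofTopsDist {tr : X → X → Prop} {p : X × X → ℝ≥0}
    (hsum : ∑ q, p q = 1) (hzero : ∀ a b, tr a b → p (a, b) = 0) :
    SubmonoDist tr (ofTopsDist p) := by
  classical
  refine ⟨by rw [IsPrefDist, finsum_eq_sum_of_fintype, sum_ofTopsDist, hsum], fun pr hpr => ?_⟩
  refine sum_eq_zero fun q hq => hzero q.1 q.2 ?_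
  by_contra hq'
  exact hpr ((mem_filter.1 hq).2 ▸ submonoPair_ofTops hq')

theorem inducedIR_ofTopsDist (p : X × X → ℝ≥0) (x x' : X) :
    inducedIR (ofTopsDist p) x x' = p (x, x') := by
  classical
  unfold ofTopsDist
  rw [inducedIR_eq_sum]
  refine (sum_filter_fiberwise (fun q : X × X => LatentPref.ofTops q.1 q.2) _ p).trans ?_
  simp [LatentPref.ofTops, greatestElem_topTwo_iff, ← Prod.mk_inj, filter_eq]

end

theorem admissible_rationalized_by_submonotone_general
    {X : Type*} [Fintype X]
    (tr : X → X → Prop)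
    (p : X × X → ℝ≥0) (hsum : ∑ q : X × X, p q = 1)
    (hzero : ∀ a b : X, tr a b → p (a, b) = 0) :
    ∃ h : LatentPref X → ℝ≥0, SubmonoDist tr h ∧
      ∀ x x' : X, inducedIR h x x' = p (x, x') :=
  ⟨ofTopsDist p, submonoDist_ofTopsDist hsum hzero, inducedIR_ofTopsDist p⟩

/-- For an irreflexive relation `⊵`, every distribution over
instrument-response types that vanishes on the pairs ruled out by `⊵` is rationalized by a
`⊵`-submonotone distribution over latent preference types. -/
theorem admissible_rationalized_by_submonotone
    {X : Type*} [Fintype X] [Nonempty X]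
    (tr : X → X → Prop) (hirr : ∀ a : X, ¬ tr a a)
    (p : X × X → ℝ≥0) (hsum : ∑ q : X × X, p q = 1)
    (hzero : ∀ a b : X, tr a b → p (a, b) = 0) :
    ∃ h : LatentPref X → ℝ≥0, SubmonoDist tr h ∧
      ∀ x x' : X, inducedIR h x x' = p (x, x') :=
  admissible_rationalized_by_submonotone_general tr p hsum hzero
end

section
/- Let X be a nonempty finite type and ⊵ an irreflexive relation on X. Then for every pair (a,b) ∈ X × X, the following are equivalent: (i) there exists a ⊵-submonotone distribution h over latent preference types with p_h(a,b) > 0; (ii) ¬(a ⊵ b). Equivalently, the set of instrument-response types realizable under ⊵-submonotonicity is exactly the complement of {(a,b) | a ⊵ b}, so this complement is the minimal response-type restriction implied by ⊵-submonotonicity. -/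
open scoped NNReal

/-! Necessity: if `h` puts positive weight on some `(r₀, r₁)` with greatest elements `a` and `b`,
then `r₀ a b`; submonotonicity along `a ⊵ b` forces `r₁ a b`, contradicting that `b` is
`r₁`-greatest. Sufficiency: starting from any strict total order, put `b` and then `a` on top
to get `r₀`, and `a` and then `b` on top to get `r₁`. These disagree only on the pair `(a, b)`,
so `(r₀, r₁)` is submonotone as soon as `¬ a ⊵ b`, and the point mass at it realises `(a, b)`. -/

section

variable {X : Type*}

def promote (m : X) (r : X → X → Prop) (x y : X) : Prop :=
  x = m ∧ y ≠ m ∨ x ≠ m ∧ y ≠ m ∧ r x y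

theorem greatestElem_promote (m : X) (r : X → X → Prop) : GreatestElem (promote m r) m :=
  fun _ hx => .inl ⟨rfl, hx⟩

instance isStrictTotalOrder_promote (m : X) (r : X → X → Prop) [IsStrictTotalOrder X r] :
    IsStrictTotalOrder X (promote m r) where
  toTrichotomous := Std.trichotomous_of_rel_or_eq_or_rel_swap fun {x y} => by
    unfold promote
    have := trichotomous_of r x y
    grind
  irrefl x := by unfold promote; have := irrefl_of r x; tauto
  trans x y z := by unfold promote; have : r x y → r y z → r x z := trans_of r; tauto

theorem promote_promote_swap {a b : X} {r : X → X → Prop} {x y : X}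
    (h : promote a (promote b r) x y) : x = a ∧ y = b ∨ promote b (promote a r) x y := by
  unfold promote at *
  by_cases x = b <;> by_cases y = a <;> tauto

theorem not_rel_of_submonoPair {tr r₀ r₁ : X → X → Prop} [Std.Asymm r₁] {a b : X}
    (hsub : SubmonoPair tr (r₀, r₁)) (ha : GreatestElem r₀ a) (hb : GreatestElem r₁ b)
    (hab : a ≠ b) : ¬ tr a b :=
  fun htr => asymm (hsub a b htr (ha b hab.symm)) (hb a hab)

theorem exists_ne_zero_of_inducedIR_ne_zero {h : LatentPref X → ℝ≥0} {a b : X}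
    (hne : inducedIR h a b ≠ 0) :
    ∃ pr : LatentPref X, (GreatestElem pr.1.1 a ∧ GreatestElem pr.1.2 b) ∧ h pr ≠ 0 :=
  exists_ne_zero_of_finsum_mem_ne_zero
    (s := {pr : LatentPref X | GreatestElem pr.1.1 a ∧ GreatestElem pr.1.2 b}) hne

noncomputable def diracPref (pr₀ : LatentPref X) : LatentPref X → ℝ≥0 := Set.indicator {pr₀} 1

theorem submonoDist_diracPref {tr : X → X → Prop} {pr₀ : LatentPref X}
    (h : SubmonoPair tr pr₀.1) : SubmonoDist tr (diracPref pr₀) := by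
  refine ⟨?_, fun pr hpr => Set.indicator_of_notMem (fun hmem => hpr ?_) _⟩
  · rw [IsPrefDist, diracPref, ← finsum_mem_def, finsum_mem_singleton, Pi.one_apply]
  · rwa [Set.mem_singleton_iff.1 hmem]

theorem inducedIR_diracPref {pr₀ : LatentPref X} {a b : X}
    (ha : GreatestElem pr₀.1.1 a) (hb : GreatestElem pr₀.1.2 b) :
    inducedIR (diracPref pr₀) a b = 1 := by
  classical
  rw [inducedIR, finsum_eq_single _ pr₀, finsum_eq_if, if_pos ⟨ha, hb⟩]
  · exact Set.indicator_of_mem rfl _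
  · intro pr hpr
    simp [diracPref, hpr]

noncomputable def swapTopPair (a b : X) : LatentPref X :=
  ⟨(promote a (promote b WellOrderingRel), promote b (promote a WellOrderingRel)),
    inferInstance, inferInstance⟩

theorem submonoPair_swapTopPair {tr : X → X → Prop} {a b : X} (h : ¬ tr a b) :
    SubmonoPair tr (swapTopPair a b).1 := by
  intro x y hxy hr₀
  rcases promote_promote_swap hr₀ with ⟨rfl, rfl⟩ | hr₁
  · exact absurd hxy h
  · exact hr₁

end

theorem submonotone_minimal_restriction_general
    {X : Type*}
    (tr : X → X → Prop) (hirr : ∀ a : X, ¬ tr a a) :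
    ∀ a b : X,
      (∃ h : LatentPref X → ℝ≥0, SubmonoDist tr h ∧ 0 < inducedIR h a b) ↔ ¬ tr a b := by
  intro a b
  constructor
  · rintro ⟨h, ⟨-, hvanish⟩, hpos⟩ htr
    obtain ⟨pr, ⟨ha, hb⟩, hpr⟩ := exists_ne_zero_of_inducedIR_ne_zero hpos.ne'
    have hsub : SubmonoPair tr pr.1 := not_imp_comm.1 (hvanish pr) hpr
    have : IsStrictTotalOrder X pr.1.2 := pr.2.2
    have hab : a ≠ b := fun hab => hirr a (hab ▸ htr)
    exact not_rel_of_submonoPair hsub ha hb hab htr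
  · intro htr
    refine ⟨_, submonoDist_diracPref (submonoPair_swapTopPair htr), ?_⟩
    rw [inducedIR_diracPref (greatestElem_promote _ _) (greatestElem_promote _ _)]
    exact one_pos

/-- For an irreflexive relation `⊵` on a nonempty finite type, an
instrument-response type `(a, b)` is realizable with positive probability under some
`⊵`-submonotone distribution over latent preference types if and only if `¬ (a ⊵ b)`:
the complement of `{(a,b) | a ⊵ b}` is exactly the minimal response-type restriction
implied by `⊵`-submonotonicity. -/
theorem submonotone_minimal_restriction
    {X : Type*} [Fintype X] [Nonempty X]
    (tr : X → X → Prop) (hirr : ∀ a : X, ¬ tr a a) :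
    ∀ a b : X,
      (∃ h : LatentPref X → ℝ≥0, SubmonoDist tr h ∧ 0 < inducedIR h a b) ↔ ¬ tr a b :=
  submonotone_minimal_restriction_general tr hirr
end

section
/- Let X be a finite type and let ⊵ᴿ and ⊵* be two relations on X. Suppose there exist a, b ∈ X with a ≠ b such that a ⊵ᴿ b but ¬(a ⊵* b). Then there exists a distribution h over latent preference types such that h is ⊵*-submonotone and p_h(a,b) > 0; in particular, imposing ⊵*-submonotonicity does not rule out the instrument-response type (a,b) even though it is ruled out by the restriction associated with ⊵ᴿ. -/
open scoped NNReal

/-!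
A point mass suffices. Rank alternatives by a map into a linear order, smaller rank meaning
more preferred. At instrument value `0` put `a` first, `b` second and the rest in any
well-order; at value `1` swap `a` and `b`. Because `a` and `b` are adjacent in the ranking,
`(a, b)` is the only pair whose order the swap reverses, so this latent type is submonotone
for every relation that does not relate `a` to `b`, and its instrument-response type is `(a, b)`.
-/

open Function

section Ranking

variable {X β : Type*}

theorem isStrictTotalOrder_of_injective [LinearOrder β] {F : X → β} (hF : Injective F) :
    IsStrictTotalOrder X (fun x y => F x < F y) :=
  letI := LinearOrder.lift' F hF
  inferInstanceAs (IsStrictTotalOrder X (· < ·))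

variable [DecidableEq X]

theorem swap_lt_swap_of_covBy [LinearOrder β] {F : X → β} (hF : Injective F) {a b x y : X}
    (hab : F a ⋖ F b) (hxy : F x < F y) (hne : ¬(x = a ∧ y = b)) :
    F (Equiv.swap a b x) < F (Equiv.swap a b y) := by
  have above_a : ∀ c, F a < F c → c ≠ b → F b < F c := fun c hc hcb =>
    (hab.ge_of_gt hc).lt_of_ne (hF.ne hcb.symm)
  have below_b : ∀ c, F c < F b → c ≠ a → F c < F a := fun c hc hca =>
    (hab.le_of_lt hc).lt_of_ne (hF.ne hca)
  have hab_lt := hab.lt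
  rw [Equiv.swap_apply_def, Equiv.swap_apply_def]
  split_ifs <;> grind

def rankFirst (m : X) (F : X → β) : X → WithBot β :=
  fun x => if x = m then ⊥ else F x

theorem rankFirst_self (m : X) (F : X → β) : rankFirst m F m = ⊥ := if_pos rfl

theorem rankFirst_of_ne {m x : X} (F : X → β) (h : x ≠ m) : rankFirst m F x = F x := if_neg h

theorem rankFirst_self_lt [LT β] {m x : X} (F : X → β) (h : x ≠ m) :
    rankFirst m F m < rankFirst m F x := by
  rw [rankFirst_self, rankFirst_of_ne F h]
  exact WithBot.bot_lt_coe _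

theorem rankFirst_injective {F : X → β} (hF : Injective F) (m : X) :
    Injective (rankFirst m F) := by
  intro x y hxy
  unfold rankFirst at hxy
  split_ifs at hxy <;> simp_all [hF.eq_iff]

end Ranking

section PointMass

variable {X : Type*} [DecidableEq (LatentPref X)] (p : LatentPref X)

theorem isPrefDist_single : IsPrefDist (Pi.single p 1 : LatentPref X → ℝ≥0) := by
  rw [IsPrefDist, finsum_eq_single _ p fun q hq => Pi.single_eq_of_ne hq 1, Pi.single_eq_same]

theorem submonoDist_single {tr : X → X → Prop} (hp : SubmonoPair tr p.1) :
    SubmonoDist tr (Pi.single p 1) :=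
  ⟨isPrefDist_single p, fun q hq => Pi.single_eq_of_ne (by rintro rfl; exact hq hp) 1⟩

theorem inducedIR_single {x x' : X} (hx : GreatestElem p.1.1 x) (hx' : GreatestElem p.1.2 x') :
    inducedIR (Pi.single p 1) x x' = 1 := by
  classical
  rw [inducedIR, finsum_eq_single _ p fun q hq => by simp [Pi.single_eq_of_ne hq],
    finsum_eq_if, if_pos ⟨hx, hx'⟩, Pi.single_eq_same]

end PointMass

theorem exists_submonoPair_greatestElem {X : Type*} {tr : X → X → Prop} {a b : X}
    (hab : a ≠ b) (h : ¬ tr a b) :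
    ∃ p : LatentPref X, SubmonoPair tr p.1 ∧ GreatestElem p.1.1 a ∧ GreatestElem p.1.2 b := by
  classical
  let : LinearOrder X := IsWellOrder.linearOrder WellOrderingRel
  let F := rankFirst a (rankFirst b id)
  have hF : Injective F := rankFirst_injective (rankFirst_injective injective_id b) a
  have hcov : F a ⋖ F b := by
    simp only [F, rankFirst_self, rankFirst_of_ne _ hab.symm]
    exact WithBot.bot_covBy_coe.2 isMin_bot
  refine ⟨⟨(fun x y => F x < F y, fun x y => F (Equiv.swap a b x) < F (Equiv.swap a b y)),
    isStrictTotalOrder_of_injective hF,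
    isStrictTotalOrder_of_injective (hF.comp (Equiv.swap a b).injective)⟩, ?_, ?_, ?_⟩
  · intro x y hxy hlt
    exact swap_lt_swap_of_covBy hF hcov hlt fun ⟨hx, hy⟩ => h (hx ▸ hy ▸ hxy)
  · exact fun x hx => rankFirst_self_lt _ hx
  · intro x hx
    show F (Equiv.swap a b b) < F (Equiv.swap a b x)
    rw [Equiv.swap_apply_right]
    exact rankFirst_self_lt _ (by rwa [Ne, Equiv.swap_apply_eq_iff, Equiv.swap_apply_left])

theorem submonotone_other_relation_does_not_rule_out_general
    {X : Type*}
    (trS : X → X → Prop)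
    (a b : X) (hab : a ≠ b) (hS : ¬ trS a b) :
    ∃ h : LatentPref X → ℝ≥0, SubmonoDist trS h ∧ 0 < inducedIR h a b := by
  classical
  obtain ⟨p, hp, ha, hb⟩ := exists_submonoPair_greatestElem hab hS
  exact ⟨Pi.single p 1, submonoDist_single p hp, by rw [inducedIR_single p ha hb]; exact one_pos⟩

/-- **Lemma, part 3.** If `⊵ᴿ` relates some pair `(a, b)` of distinct
elements not related by `⊵*`, then there is a `⊵*`-submonotone distribution over latent
preference types that assigns positive probability to the instrument-response type
`(a, b)`, even though `(a, b)` is ruled out by the restriction associated with `⊵ᴿ`. -/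
theorem submonotone_other_relation_does_not_rule_out
    {X : Type*} [Fintype X]
    (trR trS : X → X → Prop)
    (a b : X) (hab : a ≠ b) (hR : trR a b) (hS : ¬ trS a b) :
    ∃ h : LatentPref X → ℝ≥0, SubmonoDist trS h ∧ 0 < inducedIR h a b :=
  submonotone_other_relation_does_not_rule_out_general trS a b hab hS
end
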